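/- arXiv:2012.06732 — 11 statements merged into one kernel-verified Lean document; each statement's English description precedes it below -/
import Mathlib

section
/- For every n ∈ ℤ and every (n₁,n₂,n₃) ∈ Γ(n), the phase φ(n₁,n₂,n₃,n) = n₁⁴ − n₂⁴ + n₃⁴ − n⁴ satisfies |φ(n₁,n₂,n₃,n)| ≥ max(1, n_max²), where n_max = max(|n₁|,|n₂|,|n₃|,|n|). In particular φ does not vanish on Γ(n). -/
/-- The index set `Γ(n) = {(n₁,n₂,n₃) ∈ ℤ³ : n = n₁ − n₂ + n₃, n₁ ≠ n, n₃ ≠ n}`. -/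
def Gamma (n : ℤ) : Set (ℤ × ℤ × ℤ) :=
  {p | n = p.1 - p.2.1 + p.2.2 ∧ p.1 ≠ n ∧ p.2.2 ≠ n}

/-- The fourth-order resonance function `φ(n₁,n₂,n₃,n) = n₁⁴ − n₂⁴ + n₃⁴ − n⁴`. -/
def phi (p : ℤ × ℤ × ℤ) (n : ℤ) : ℤ := p.1 ^ 4 - p.2.1 ^ 4 + p.2.2 ^ 4 - n ^ 4

/-- `n_max = max(|n₁|,|n₂|,|n₃|,|n|)`. -/
def nmax (p : ℤ × ℤ × ℤ) (n : ℤ) : ℤ := max (max |p.1| |p.2.1|) (max |p.2.2| |n|)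

private lemma two_max (A B : ℤ) : 2 * max A B = max (2 * A) (2 * B) := by
  rcases le_total A B with h | h
  · rw [max_eq_right h, max_eq_right (by omega : 2 * A ≤ 2 * B)]
  · rw [max_eq_left h, max_eq_left (by omega : 2 * B ≤ 2 * A)]

set_option maxHeartbeats 1000000 in
/-- On `Γ(n)` the fourth-order phase satisfies `|φ| ≥ max(1, n_max²)`;
in particular it does not vanish there. -/
theorem abs_phi_ge_max_one_nmax_sq (n : ℤ) (p : ℤ × ℤ × ℤ) (hp : p ∈ Gamma n) :
    max 1 (nmax p n ^ 2) ≤ |phi p n| := by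
  obtain ⟨heq, h1, h3⟩ := hp
  set x : ℤ := p.1 - n with hxdef
  set y : ℤ := p.2.2 - n with hydef
  have hx : x ≠ 0 := fun h => h1 (by omega)
  have hy : y ≠ 0 := fun h => h3 (by omega)
  have ha : 1 ≤ |x| := Int.one_le_abs hx
  have hb : 1 ≤ |y| := Int.one_le_abs hy
  have hphi : phi p n = -(x * y * (3 * (2 * n + x + y) ^ 2 + x ^ 2 + y ^ 2)) := by
    have h2 : p.2.1 = p.1 + p.2.2 - n := by omega
    simp only [phi, h2, hxdef, hydef]
    ring
  have hC : (0 : ℤ) ≤ 3 * (2 * n + x + y) ^ 2 + x ^ 2 + y ^ 2 := by positivity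
  have habs : |phi p n| = |x| * |y| * (3 * (2 * n + x + y) ^ 2 + x ^ 2 + y ^ 2) := by
    rw [hphi, abs_neg, abs_mul, abs_mul, abs_of_nonneg hC]
  have hxa := le_abs_self x
  have hxa' := neg_abs_le x
  have hya := le_abs_self y
  have hya' := neg_abs_le y
  have hsa := le_abs_self (2 * n + x + y)
  have hsa' := neg_abs_le (2 * n + x + y)
  have k1 : 2 * |p.1| ≤ |2 * n + x + y| + |x| + |y| := by
    rcases abs_cases p.1 with ⟨h, _⟩ | ⟨h, _⟩ <;> omega
  have k2 : 2 * |p.2.1| ≤ |2 * n + x + y| + |x| + |y| := by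
    rcases abs_cases p.2.1 with ⟨h, _⟩ | ⟨h, _⟩ <;> omega
  have k3 : 2 * |p.2.2| ≤ |2 * n + x + y| + |x| + |y| := by
    rcases abs_cases p.2.2 with ⟨h, _⟩ | ⟨h, _⟩ <;> omega
  have k4 : 2 * |n| ≤ |2 * n + x + y| + |x| + |y| := by
    rcases abs_cases n with ⟨h, _⟩ | ⟨h, _⟩ <;> omega
  have hm : 2 * nmax p n ≤ |2 * n + x + y| + |x| + |y| := by
    simp only [nmax, two_max]
    exact max_le (max_le k1 k2) (max_le k3 k4)
  have h0 : 0 ≤ nmax p n :=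
    le_trans (abs_nonneg n) ((le_max_right |p.2.2| |n|).trans (le_max_right _ _))
  have hs : 0 ≤ |2 * n + x + y| := abs_nonneg _
  have hsq : (2 * n + x + y) ^ 2 = |2 * n + x + y| ^ 2 := (sq_abs _).symm
  have hxsq : x ^ 2 = |x| ^ 2 := (sq_abs x).symm
  have hysq : y ^ 2 = |y| ^ 2 := (sq_abs y).symm
  rw [habs, hsq, hxsq, hysq]
  set a := |x|
  set b := |y|
  set s := |2 * n + x + y|
  have ha0 : (0:ℤ) ≤ a - 1 := by omega
  have hb0 : (0:ℤ) ≤ b - 1 := by omega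
  have ht0 : (0:ℤ) ≤ a + b - 2 := by omega
  have P1 : 0 ≤ a * b * (a - b) ^ 2 :=
    mul_nonneg (mul_nonneg (by omega) (by omega)) (sq_nonneg _)
  have P2 : 0 ≤ (a - 1) * (b - 1) * s ^ 2 :=
    mul_nonneg (mul_nonneg ha0 hb0) (sq_nonneg _)
  have P3 : 0 ≤ (a - 1) * (b - 1) * (a + b) ^ 2 :=
    mul_nonneg (mul_nonneg ha0 hb0) (sq_nonneg _)
  have P4 : 0 ≤ (a + b - 2) * s ^ 2 := mul_nonneg ht0 (sq_nonneg _)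
  have P5 : 0 ≤ (a + b - 2) * (a + b) ^ 2 := mul_nonneg ht0 (sq_nonneg _)
  have P6 : 0 ≤ (s - (a + b)) ^ 2 := sq_nonneg _
  have P7 : 0 ≤ s ^ 2 := sq_nonneg _
  have key : (s + a + b) ^ 2 ≤ 4 * (a * b * (3 * s ^ 2 + a ^ 2 + b ^ 2)) := by nlinarith
  have h4 : (2 * nmax p n) ^ 2 ≤ (s + a + b) ^ 2 := by
    apply pow_le_pow_left₀ (by omega) hm
  have h5 : 4 * nmax p n ^ 2 ≤ (s + a + b) ^ 2 := by
    rw [show (4:ℤ) * nmax p n ^ 2 = (2 * nmax p n) ^ 2 by ring]; exact h4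
  have hab : (1:ℤ) * 1 ≤ a * b := mul_le_mul ha hb zero_le_one (le_trans zero_le_one ha)
  have ha2 : (1:ℤ) ≤ a ^ 2 := by simpa using pow_le_pow_left₀ zero_le_one ha 2
  have hcc : (1:ℤ) ≤ 3 * s ^ 2 + a ^ 2 + b ^ 2 := by linarith [sq_nonneg s, sq_nonneg b]
  refine max_le ?_ ?_
  · have := mul_le_mul hab hcc zero_le_one (by linarith)
    linarith
  · linarith
end

section
/- Let n₁, n₂, n₃, n be integers with n = n₁ − n₂ + n₃, and set φ = n₁⁴ − n₂⁴ + n₃⁴ − n⁴, μ = n₁² − n₂² + n₃² − n², and n_max = max(|n₁|,|n₂|,|n₃|,|n|). Then (1/2)·|μ|·n_max² ≤ |φ| ≤ 6·|μ|·n_max². -/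
/-- Under the convolution constraint `n = n₁ − n₂ + n₃`, the fourth-order phase
`φ = n₁⁴ − n₂⁴ + n₃⁴ − n⁴` and the second-order phase `μ = n₁² − n₂² + n₃² − n²`
satisfy `(1/2)·|μ|·n_max² ≤ |φ| ≤ 6·|μ|·n_max²`, where
`n_max = max(|n₁|,|n₂|,|n₃|,|n|)`. -/
theorem abs_phi_comparable_mu_nmax_sq (n₁ n₂ n₃ n : ℤ) (h : n = n₁ - n₂ + n₃) :
    (1 / 2 : ℝ) * (|n₁ ^ 2 - n₂ ^ 2 + n₃ ^ 2 - n ^ 2| : ℤ)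
        * ((max (max |n₁| |n₂|) (max |n₃| |n|) : ℤ) : ℝ) ^ 2
      ≤ ((|n₁ ^ 4 - n₂ ^ 4 + n₃ ^ 4 - n ^ 4| : ℤ) : ℝ) ∧
    ((|n₁ ^ 4 - n₂ ^ 4 + n₃ ^ 4 - n ^ 4| : ℤ) : ℝ)
      ≤ 6 * (|n₁ ^ 2 - n₂ ^ 2 + n₃ ^ 2 - n ^ 2| : ℤ)
        * ((max (max |n₁| |n₂|) (max |n₃| |n|) : ℤ) : ℝ) ^ 2 := by
  subst h
  set a := n₁ with ha
  set b := n₂ with hb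
  set c := n₃ with hc
  set M : ℤ := max (max |a| |b|) (max |c| |a - b + c|) with hMdef
  set S : ℤ := a ^ 2 + b ^ 2 + c ^ 2 + (a - b + c) ^ 2 + 2 * (a + c) ^ 2 with hS
  set φ : ℤ := a ^ 4 - b ^ 4 + c ^ 4 - (a - b + c) ^ 4 with hφ
  set μ : ℤ := a ^ 2 - b ^ 2 + c ^ 2 - (a - b + c) ^ 2 with hμ
  have hSnn : 0 ≤ S := by positivity
  have hid : 2 * φ = μ * S := by rw [hφ, hμ, hS]; ring
  have habs : 2 * |φ| = |μ| * S := by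
    rw [← abs_of_nonneg hSnn, ← abs_mul, ← hid, abs_mul]
    simp
  -- bounds on squares by M
  have h1 : |a| ≤ M := le_trans (le_max_left _ _) (le_max_left _ _)
  have h2 : |b| ≤ M := le_trans (le_max_right _ _) (le_max_left _ _)
  have h3 : |c| ≤ M := le_trans (le_max_left _ _) (le_max_right _ _)
  have h4 : |a - b + c| ≤ M := le_trans (le_max_right _ _) (le_max_right _ _)
  have sq1 : a ^ 2 ≤ M ^ 2 := by
    rw [← sq_abs a]; exact pow_le_pow_left₀ (abs_nonneg _) h1 2
  have sq2 : b ^ 2 ≤ M ^ 2 := by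
    rw [← sq_abs b]; exact pow_le_pow_left₀ (abs_nonneg _) h2 2
  have sq3 : c ^ 2 ≤ M ^ 2 := by
    rw [← sq_abs c]; exact pow_le_pow_left₀ (abs_nonneg _) h3 2
  have sq4 : (a - b + c) ^ 2 ≤ M ^ 2 := by
    rw [← sq_abs]; exact pow_le_pow_left₀ (abs_nonneg _) h4 2
  have hac : |a + c| ≤ 2 * M := by
    calc |a + c| ≤ |a| + |c| := abs_add_le _ _
    _ ≤ 2 * M := by linarith
  have sq5 : (a + c) ^ 2 ≤ 4 * M ^ 2 := by
    have := pow_le_pow_left₀ (abs_nonneg (a + c)) hac 2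
    rw [sq_abs] at this
    have h4M : (2 * M) ^ 2 = 4 * M ^ 2 := by ring
    linarith
  have hSup : S ≤ 12 * M ^ 2 := by rw [hS]; linarith
  -- M^2 ≤ S : M equals one of the four abs values
  have hMlow : M ^ 2 ≤ S := by
    have e1 : |a| ^ 2 ≤ S := by rw [sq_abs, hS]; linarith [sq_nonneg b, sq_nonneg c, sq_nonneg (a - b + c), sq_nonneg (a + c)]
    have e2 : |b| ^ 2 ≤ S := by rw [sq_abs, hS]; linarith [sq_nonneg a, sq_nonneg c, sq_nonneg (a - b + c), sq_nonneg (a + c)]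
    have e3 : |c| ^ 2 ≤ S := by rw [sq_abs, hS]; linarith [sq_nonneg a, sq_nonneg b, sq_nonneg (a - b + c), sq_nonneg (a + c)]
    have e4 : |a - b + c| ^ 2 ≤ S := by rw [sq_abs, hS]; linarith [sq_nonneg a, sq_nonneg b, sq_nonneg c, sq_nonneg (a + c)]
    rcases max_choice (max |a| |b|) (max |c| |a - b + c|) with hm | hm <;>
      rw [hMdef, hm] <;>
      [rcases max_choice |a| |b| with hm2 | hm2; rcases max_choice |c| |a - b + c| with hm2 | hm2] <;>
      rw [hm2] <;> assumption
  have hμnn : 0 ≤ |μ| := abs_nonneg _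
  -- integer inequalities
  have int1 : |μ| * M ^ 2 ≤ 2 * |φ| := by
    rw [habs]; exact mul_le_mul_of_nonneg_left hMlow hμnn
  have int2 : 2 * |φ| ≤ |μ| * (12 * M ^ 2) := by
    rw [habs]; exact mul_le_mul_of_nonneg_left hSup hμnn
  constructor
  · have := (Int.cast_le (R := ℝ)).2 int1
    push_cast at this ⊢
    nlinarith
  · have := (Int.cast_le (R := ℝ)).2 int2
    push_cast at this ⊢
    nlinarith
end

section
/- Let 0 < s ≤ 1/2, let 0 < ε < s/2, and set σ = s − 1/2 − ε. Then sup_{n∈ℤ} Σ_{(n₁,n₂,n₃)∈Γ(n)} n_max^{4s−8σ} / φ(n₁,n₂,n₃,n)² < ∞, where n_max = max(|n₁|,|n₂|,|n₃|,|n|). -/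
/-- The comparison weight `(a,c) ↦ 144 / (a² c²)` on `ℤ × ℤ`. -/
noncomputable def gbd (q : ℤ × ℤ) : ℝ := 144 * (1 / (q.1 : ℝ) ^ 2 * (1 / (q.2 : ℝ) ^ 2))

lemma gbd_nonneg (q : ℤ × ℤ) : 0 ≤ gbd q := by
  unfold gbd; positivity

lemma gbd_summable : Summable gbd := by
  have h : Summable (fun a : ℤ => 1 / (a : ℝ) ^ 2) :=
    Real.summable_one_div_int_pow.2 (by norm_num)
  exact ((h.mul_of_nonneg h (fun a => by positivity) (fun a => by positivity)).mul_left 144)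

/-- Key pointwise real inequality. -/
lemma key_ineq (N A C M : ℝ) (hA : 1 ≤ A ^ 2) (hC : 1 ≤ C ^ 2)
    (hM1 : 1 ≤ M) (hM : M ^ 2 ≤ 3 * (N ^ 2 + A ^ 2 + C ^ 2))
    (α : ℝ) (hα : α ≤ 4)
    (Φ : ℝ) (hΦ : Φ = -2 * A * C * (6 * N ^ 2 + 6 * N * (A + C) + 2 * A ^ 2 + 3 * A * C + 2 * C ^ 2)) :
    M ^ α / Φ ^ 2 ≤ 144 * (1 / A ^ 2 * (1 / C ^ 2)) := by
  set K : ℝ := N ^ 2 + A ^ 2 + C ^ 2 with hK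
  set Q : ℝ := 6 * N ^ 2 + 6 * N * (A + C) + 2 * A ^ 2 + 3 * A * C + 2 * C ^ 2 with hQdef
  have hKpos : 0 < K := by rw [hK]; nlinarith
  have hQ : K ≤ 8 * Q := by
    rw [hK, hQdef]
    nlinarith [sq_nonneg (47 * N + 24 * (A + C)), sq_nonneg (A + C), sq_nonneg (A - C)]
  have hQpos : 0 < Q := by linarith
  have hΦ2 : A ^ 2 * C ^ 2 * K ^ 2 / 16 ≤ Φ ^ 2 := by
    have hΦ2eq : Φ ^ 2 = 4 * (A ^ 2 * C ^ 2) * Q ^ 2 := by rw [hΦ]; ring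
    have hK2 : K ^ 2 ≤ 64 * Q ^ 2 := by nlinarith
    have hAC : (0 : ℝ) < A ^ 2 * C ^ 2 := by nlinarith
    rw [hΦ2eq]
    calc A ^ 2 * C ^ 2 * K ^ 2 / 16 ≤ A ^ 2 * C ^ 2 * (64 * Q ^ 2) / 16 := by
          apply div_le_div_of_nonneg_right ?_ (by norm_num)
          exact mul_le_mul_of_nonneg_left hK2 hAC.le
      _ = 4 * (A ^ 2 * C ^ 2) * Q ^ 2 := by ring
  have hΦ2pos : 0 < Φ ^ 2 := lt_of_lt_of_le (by positivity) hΦ2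
  have hnum : M ^ α ≤ 9 * K ^ 2 := by
    have h4 : M ^ α ≤ M ^ (4 : ℝ) := Real.rpow_le_rpow_of_exponent_le hM1 hα
    have h4' : M ^ (4 : ℝ) = (M ^ 2) ^ 2 := by
      rw [show (4 : ℝ) = ((4 : ℕ) : ℝ) by norm_num, Real.rpow_natCast]; ring
    calc M ^ α ≤ M ^ (4 : ℝ) := h4
      _ = (M ^ 2) ^ 2 := h4'
      _ ≤ (3 * K) ^ 2 := by nlinarith [sq_nonneg M]
      _ = 9 * K ^ 2 := by ring
  have hden : (0 : ℝ) < A ^ 2 * C ^ 2 * K ^ 2 / 16 := by positivity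
  calc M ^ α / Φ ^ 2 ≤ 9 * K ^ 2 / (A ^ 2 * C ^ 2 * K ^ 2 / 16) := by
        apply div_le_div₀ (by positivity) hnum hden hΦ2
    _ = 144 * (1 / A ^ 2 * (1 / C ^ 2)) := by
        field_simp
        ring

/-- For `0 < s ≤ 1/2`, `0 < ε < s/2` and `σ = s − 1/2 − ε`, one has
`sup_{n∈ℤ} Σ_{Γ(n)} n_max^{4s−8σ} / φ² < ∞`. -/
theorem sup_sum_nmax_pow_div_phi_sq_lt_top (s ε σ : ℝ)
    (hs0 : 0 < s) (hs : s ≤ 1 / 2) (hε0 : 0 < ε) (hε : ε < s / 2)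
    (hσ : σ = s - 1 / 2 - ε) :
    ∃ C : ℝ, ∀ n : ℤ,
      Summable (fun p : Gamma n =>
        ((nmax p.1 n : ℝ)) ^ (4 * s - 8 * σ) / ((phi p.1 n : ℝ)) ^ 2) ∧
      ∑' p : Gamma n,
        ((nmax p.1 n : ℝ)) ^ (4 * s - 8 * σ) / ((phi p.1 n : ℝ)) ^ 2 ≤ C := by
  refine ⟨∑' q : ℤ × ℤ, gbd q, fun n => ?_⟩
  set α : ℝ := 4 * s - 8 * σ with hαdef
  have hα : α ≤ 4 := by rw [hαdef, hσ]; linarith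
  -- the injection into ℤ × ℤ
  set e : Gamma n → ℤ × ℤ := fun p => (p.1.1 - n, p.1.2.2 - n) with he
  have he_inj : Function.Injective e := by
    rintro ⟨⟨a1, a2, a3⟩, ha⟩ ⟨⟨b1, b2, b3⟩, hb⟩ h
    simp only [he, Prod.mk.injEq] at h
    obtain ⟨h1, h3⟩ := h
    simp only [Gamma, Set.mem_setOf_eq] at ha hb
    apply Subtype.ext
    simp only [Prod.mk.injEq]
    refine ⟨by omega, by omega, by omega⟩
  -- pointwise bound
  have hpt : ∀ p : Gamma n,
      ((nmax p.1 n : ℝ)) ^ α / ((phi p.1 n : ℝ)) ^ 2 ≤ gbd (e p) := by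
    rintro ⟨⟨n1, n2, n3⟩, hp⟩
    obtain ⟨hcon, h1, h3⟩ := hp
    replace hcon : n = n1 - n2 + n3 := hcon
    replace h1 : n1 ≠ n := h1
    replace h3 : n3 ≠ n := h3
    have hn2 : n2 = n1 + n3 - n := by omega
    set a : ℤ := n1 - n with hadf
    set c : ℤ := n3 - n with hcdf
    have hane : a ≠ 0 := sub_ne_zero.2 h1
    have hcne : c ≠ 0 := sub_ne_zero.2 h3
    have ha1 : 1 ≤ |a| := Int.one_le_abs hane
    have hc1 : 1 ≤ |c| := Int.one_le_abs hcne
    have hA : (1 : ℝ) ≤ (a : ℝ) ^ 2 := by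
      have : (1 : ℤ) ≤ a ^ 2 := by nlinarith [sq_abs a]
      exact_mod_cast this
    have hC : (1 : ℝ) ≤ (c : ℝ) ^ 2 := by
      have : (1 : ℤ) ≤ c ^ 2 := by nlinarith [sq_abs c]
      exact_mod_cast this
    -- nmax bounds
    set M : ℤ := nmax (n1, n2, n3) n with hMdef
    have eM1 : |n1| ≤ M := le_max_of_le_left (le_max_left _ _)
    have eM2 : |n2| ≤ M := le_max_of_le_left (le_max_right _ _)
    have eM3 : |n3| ≤ M := le_max_of_le_right (le_max_left _ _)
    have eM4 : |n| ≤ M := le_max_of_le_right (le_max_right _ _)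
    have hM1 : (1 : ℤ) ≤ M := by
      rcases eq_or_ne n 0 with rfl | hne
      · exact le_trans (Int.one_le_abs h1) eM1
      · exact le_trans (Int.one_le_abs hne) eM4
    have hMle : M ≤ |n| + |a| + |c| := by
      have b1 : |n1| ≤ |n| + |a| + |c| := by
        have hn1 : n1 = n + a := by omega
        rw [hn1]; linarith [abs_add_le n a, abs_nonneg c]
      have b2 : |n2| ≤ |n| + |a| + |c| := by
        have hn2' : n2 = n + a + c := by omega
        rw [hn2']; linarith [abs_add_le (n + a) c, abs_add_le n a]
      have b3 : |n3| ≤ |n| + |a| + |c| := by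
        have hn3 : n3 = n + c := by omega
        rw [hn3]; linarith [abs_add_le n c, abs_nonneg a]
      have b4 : |n| ≤ |n| + |a| + |c| := by linarith [abs_nonneg a, abs_nonneg c]
      simp only [hMdef, nmax, max_le_iff]
      exact ⟨⟨b1, b2⟩, b3, b4⟩
    have hM2int : M ^ 2 ≤ 3 * (n ^ 2 + a ^ 2 + c ^ 2) := by
      nlinarith [sq_abs n, sq_abs a, sq_abs c, sq_nonneg (|n| - |a|),
        sq_nonneg (|n| - |c|), sq_nonneg (|a| - |c|), abs_nonneg n, abs_nonneg a,
        abs_nonneg c, hMle, hM1]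
    have hM2 : (M : ℝ) ^ 2 ≤ 3 * ((n : ℝ) ^ 2 + (a : ℝ) ^ 2 + (c : ℝ) ^ 2) := by
      exact_mod_cast hM2int
    -- phi identity
    have hphi : ((phi (n1, n2, n3) n : ℤ) : ℝ) =
        -2 * (a : ℝ) * (c : ℝ) * (6 * (n : ℝ) ^ 2 + 6 * (n : ℝ) * ((a : ℝ) + (c : ℝ))
          + 2 * (a : ℝ) ^ 2 + 3 * (a : ℝ) * (c : ℝ) + 2 * (c : ℝ) ^ 2) := by
      have hz : phi (n1, n2, n3) n =
          -2 * a * c * (6 * n ^ 2 + 6 * n * (a + c) + 2 * a ^ 2 + 3 * a * c + 2 * c ^ 2) := by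
        simp only [phi, hn2, hadf, hcdf]; ring
      rw [hz]; push_cast; ring
    have hkey := key_ineq (n : ℝ) (a : ℝ) (c : ℝ) (M : ℝ) hA hC
      (by exact_mod_cast hM1) hM2 α hα _ hphi
    simpa [gbd, he, hadf, hcdf] using hkey
  -- summability
  have hG : Summable (gbd ∘ e) := gbd_summable.comp_injective he_inj
  have hnn : ∀ p : Gamma n, 0 ≤ ((nmax p.1 n : ℝ)) ^ α / ((phi p.1 n : ℝ)) ^ 2 := by
    intro p
    apply div_nonneg _ (sq_nonneg _)
    apply Real.rpow_nonneg
    have h0 : (0 : ℤ) ≤ nmax p.1 n :=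
      le_trans (abs_nonneg _) (le_max_of_le_left (le_max_left _ _))
    exact_mod_cast h0
  have hsum : Summable (fun p : Gamma n =>
      ((nmax p.1 n : ℝ)) ^ α / ((phi p.1 n : ℝ)) ^ 2) :=
    Summable.of_nonneg_of_le hnn hpt hG
  refine ⟨hsum, ?_⟩
  calc ∑' p : Gamma n, ((nmax p.1 n : ℝ)) ^ α / ((phi p.1 n : ℝ)) ^ 2
      ≤ ∑' p : Gamma n, gbd (e p) := Summable.tsum_le_tsum hpt hsum hG
    _ = ∑' q : Set.range e, gbd q := by
        exact (Equiv.ofInjective e he_inj).tsum_eq (fun q : Set.range e => gbd q)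
    _ ≤ ∑' q : ℤ × ℤ, gbd q := Summable.tsum_subtype_le gbd _ gbd_nonneg gbd_summable
end

section
/- Let 0 < s ≤ 1/2, let 0 < ε < s/2, and set σ = s − 1/2 − ε. Then there exists a constant C > 0 such that for every v : ℤ → ℂ one has (with all sums taken in [0,∞]) Σ_{n∈ℤ} Σ_{(n₁,n₂,n₃)∈Γ(n)} (⟨n⟩^{2s} / |φ(n₁,n₂,n₃,n)|) · |v(n₁)| |v(n₂)| |v(n₃)| |v(n)| ≤ C · (Σ_{m∈ℤ} ⟨m⟩^{2σ} |v(m)|²)². -/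
set_option maxHeartbeats 1000000


open scoped ENNReal NNReal

/-- The Japanese bracket `⟨m⟩ = (1 + m²)^{1/2}`. -/
noncomputable def jap (m : ℤ) : ℝ := (1 + (m : ℝ) ^ 2) ^ ((1 : ℝ) / 2)

lemma jap_rpow (m : ℤ) (u : ℝ) : jap m ^ (2*u) = (1 + (m:ℝ)^2) ^ u := by
  rw [jap, ← Real.rpow_mul (by positivity)]
  congr 1; ring

/-- `x ≤ cst*q`, `1 ≤ q`, `1 ≤ cst`, `0 ≤ u ≤ 1` imply `x^u ≤ cst * q^u`. -/
lemma rpow_fac {x q cst u : ℝ} (hx : 0 ≤ x) (hq1 : 1 ≤ q) (hc : 1 ≤ cst)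
    (hxq : x ≤ cst*q) (hu0 : 0 ≤ u) (hu1 : u ≤ 1) : x ^ u ≤ cst * q ^ u := by
  have hq0 : (0:ℝ) < q := by linarith
  calc x ^ u ≤ (cst*q) ^ u := Real.rpow_le_rpow hx hxq hu0
    _ = cst ^ u * q ^ u := Real.mul_rpow (by linarith) hq0.le
    _ ≤ cst * q ^ u := by
        have h1 : cst ^ u ≤ cst := by
          have := Real.rpow_le_rpow_of_exponent_le hc hu1
          rwa [Real.rpow_one] at this
        have h2 : 0 < q ^ u := Real.rpow_pos_of_pos hq0 u
        nlinarith

lemma recip_bound {a c : ℝ} (ha : 1 ≤ a) (hc : 1 ≤ c) :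
    1/(a*c) ≤ 1/(1+a^2) + 1/(1+c^2) := by
  have h1 : (0:ℝ) < 1+a^2 := by positivity
  have h2 : (0:ℝ) < 1+c^2 := by positivity
  have hac : (0:ℝ) < a*c := by nlinarith
  rw [div_add_div _ _ h1.ne' h2.ne', div_le_div_iff₀ hac (by positivity)]
  have hac1 : (1:ℝ) ≤ a*c := by nlinarith [mul_nonneg (sub_nonneg.2 ha) (sub_nonneg.2 hc)]
  have key : 0 ≤ (a*c-1)*(a-c)^2 :=
    mul_nonneg (by linarith) (sq_nonneg _)
  nlinarith [key, mul_nonneg (sub_nonneg.2 hac1) (by positivity : (0:ℝ) ≤ a*c+1)]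

lemma phi_setup (n n₁ n₂ n₃ : ℤ) (h2 : n₂ = n₁ + n₃ - n) (h1 : n₁ ≠ n) (h3 : n₃ ≠ n) :
    ∃ q : ℝ, 1 ≤ q ∧
      |((phi (n₁, n₂, n₃) n : ℤ) : ℝ)| = 2 * |(n₁:ℝ) - n| * |(n₃:ℝ) - n| * q ∧
      1 + (n:ℝ)^2 ≤ 6*q ∧ 1 + ((n₁:ℝ) - n)^2 ≤ 3*q ∧ 1 + ((n₃:ℝ) - n)^2 ≤ 3*q ∧
      1 + (n₁:ℝ)^2 ≤ 15*q ∧ 1 + (n₃:ℝ)^2 ≤ 15*q ∧ 1 + (n₂:ℝ)^2 ≤ 28*q ∧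
      1 ≤ ((n₁:ℝ) - n)^2 ∧ 1 ≤ ((n₃:ℝ) - n)^2 := by
  set a : ℤ := n₁ - n with hadef
  set c : ℤ := n₃ - n with hcdef
  have ha : a ≠ 0 := sub_ne_zero.mpr h1
  have hc : c ≠ 0 := sub_ne_zero.mpr h3
  set Q : ℤ := 2*a^2 + 3*a*c + 2*c^2 + 6*n*a + 6*n*c + 6*n^2 with hQdef
  have hphi : phi (n₁, n₂, n₃) n = -2 * a * c * Q := by
    subst h2; simp only [phi, hQdef, hadef, hcdef]; ring
  have hA1' : (1:ℤ) ≤ a^2 := by rcases ha.lt_or_gt with h|h <;> nlinarith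
  have hC1' : (1:ℤ) ≤ c^2 := by rcases hc.lt_or_gt with h|h <;> nlinarith
  have hQ1' : (1:ℤ) ≤ Q := by nlinarith [sq_nonneg (a+c+2*n)]
  -- real versions
  set N : ℝ := (n:ℝ) with hN
  set A : ℝ := (n₁:ℝ) - N with hA
  set C : ℝ := (n₃:ℝ) - N with hC
  set q : ℝ := (Q:ℝ) with hq
  have hAcast : ((a:ℤ):ℝ) = A := by rw [hadef]; push_cast; ring
  have hCcast : ((c:ℤ):ℝ) = C := by rw [hcdef]; push_cast; ring
  have hqdef : q = 2*A^2 + 3*A*C + 2*C^2 + 6*N*A + 6*N*C + 6*N^2 := by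
    rw [hq, hQdef]; push_cast [hAcast, hCcast]; rw [← hN]
  have hA1 : (1:ℝ) ≤ A^2 := by rw [← hAcast]; exact_mod_cast hA1'
  have hC1 : (1:ℝ) ≤ C^2 := by rw [← hCcast]; exact_mod_cast hC1'
  have hq1 : (1:ℝ) ≤ q := by rw [hq]; exact_mod_cast hQ1'
  have hA2 : A^2 ≤ 2*q := by nlinarith [sq_nonneg (A+C+2*N)]
  have hC2 : C^2 ≤ 2*q := by nlinarith [sq_nonneg (A+C+2*N)]
  have hN2 : N^2 ≤ 5*q := by nlinarith [sq_nonneg (A+C+2*N), sq_nonneg (A+C), sq_nonneg (A-C)]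
  have hn₁ : (n₁:ℝ) = N + A := by rw [hA]; ring
  have hn₃ : (n₃:ℝ) = N + C := by rw [hC]; ring
  have hn₂ : (n₂:ℝ) = N + A + C := by rw [h2]; push_cast; rw [hA, hC]; push_cast; ring
  refine ⟨q, hq1, ?_, by nlinarith, by nlinarith, by nlinarith,
    by rw [hn₁]; nlinarith [sq_nonneg (N+A), sq_nonneg (N-A)],
    by rw [hn₃]; nlinarith [sq_nonneg (N-C)],
    by rw [hn₂]; nlinarith [sq_nonneg (N-A), sq_nonneg (N-C), sq_nonneg (A-C)], hA1, hC1⟩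
  rw [hphi]
  push_cast
  rw [show ((-2:ℝ)) * a * c * Q = (-2) * (((a:ℤ):ℝ) * (((c:ℤ):ℝ) * ((Q:ℤ):ℝ))) by push_cast; ring]
  rw [abs_mul, abs_mul, abs_mul]
  rw [show |(-2:ℝ)| = 2 by norm_num, abs_of_pos (by rw [← hq] at *; linarith : (0:ℝ) < ((Q:ℤ):ℝ))]
  rw [hAcast, hCcast, ← hq]
  ring

lemma key1 (s ε σ : ℝ) (hs0 : 0 < s) (hs : s ≤ 1/2) (hε0 : 0 < ε) (hε : ε < s/2)
    (hσ : σ = s - 1/2 - ε)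
    (n n₁ n₂ n₃ : ℤ) (h2 : n₂ = n₁ + n₃ - n) (h1 : n₁ ≠ n) (h3 : n₃ ≠ n) :
    jap n ^ (2*s) / |((phi (n₁, n₂, n₃) n : ℤ) : ℝ)| ≤
      2025 * (jap n₁ ^ (2*σ) * jap n₃ ^ (2*σ)) *
        (1/(1 + ((n₁:ℝ) - n)^2) + 1/(1 + ((n₃:ℝ) - n)^2)) := by
  obtain ⟨q, hq1, habs, hgn, hga, hgc, hgn₁, hgn₃, hgn₂, hA1, hC1⟩ :=
    phi_setup n n₁ n₂ n₃ h2 h1 h3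
  rw [jap_rpow n s, jap_rpow n₁ σ, jap_rpow n₃ σ, habs]
  set X : ℝ := 1 + (n:ℝ)^2 with hX
  set X1 : ℝ := 1 + (n₁:ℝ)^2 with hX1
  set X3 : ℝ := 1 + (n₃:ℝ)^2 with hX3
  set GA : ℝ := 1 + ((n₁:ℝ) - n)^2 with hGA
  set GC : ℝ := 1 + ((n₃:ℝ) - n)^2 with hGCd
  have hq0 : (0:ℝ) < q := by linarith
  have hXp : (0:ℝ) < X := by positivity
  have hX1p : (0:ℝ) < X1 := by positivity
  have hX3p : (0:ℝ) < X3 := by positivity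
  have hGAp : (0:ℝ) < GA := by positivity
  have hGCp : (0:ℝ) < GC := by positivity
  have hσ0 : 0 ≤ -σ := by rw [hσ]; linarith
  have hσ1 : -σ ≤ 1 := by rw [hσ]; linarith
  have e1 : X ^ s ≤ 6 * q ^ s := rpow_fac hXp.le hq1 (by norm_num) hgn hs0.le (by linarith)
  have e2 : X1 ^ (-σ) ≤ 15 * q ^ (-σ) := rpow_fac hX1p.le hq1 (by norm_num) hgn₁ hσ0 hσ1
  have e3 : X3 ^ (-σ) ≤ 15 * q ^ (-σ) := rpow_fac hX3p.le hq1 (by norm_num) hgn₃ hσ0 hσ1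
  have big : X ^ s * X1 ^ (-σ) * X3 ^ (-σ) ≤ 1350 * q := by
    have hm : X ^ s * X1 ^ (-σ) * X3 ^ (-σ) ≤ (6*q^s) * (15*q^(-σ)) * (15*q^(-σ)) := by
      have p1 : 0 ≤ X ^ s := (Real.rpow_pos_of_pos hXp s).le
      have p2 : 0 ≤ X1 ^ (-σ) := (Real.rpow_pos_of_pos hX1p _).le
      have p3 : 0 ≤ X3 ^ (-σ) := (Real.rpow_pos_of_pos hX3p _).le
      have p4 : 0 ≤ (6:ℝ)*q^s := by positivity
      exact mul_le_mul (mul_le_mul e1 e2 p2 p4) e3 p3 (by positivity)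
    have hq' : q ^ s * q ^ (-σ) * q ^ (-σ) = q ^ (s + -σ + -σ) := by
      rw [Real.rpow_add hq0, Real.rpow_add hq0]
    have hqe : q ^ (s + -σ + -σ) ≤ q := by
      have := Real.rpow_le_rpow_of_exponent_le hq1 (show s + -σ + -σ ≤ 1 by rw [hσ]; linarith)
      rwa [Real.rpow_one] at this
    calc X ^ s * X1 ^ (-σ) * X3 ^ (-σ) ≤ (6*q^s) * (15*q^(-σ)) * (15*q^(-σ)) := hm
      _ = 1350 * (q ^ s * q ^ (-σ) * q ^ (-σ)) := by ring
      _ = 1350 * q ^ (s + -σ + -σ) := by rw [hq']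
      _ ≤ 1350 * q := by linarith
  -- multiply by X1^σ * X3^σ
  have hP1 : (0:ℝ) < X1 ^ σ := Real.rpow_pos_of_pos hX1p σ
  have hP3 : (0:ℝ) < X3 ^ σ := Real.rpow_pos_of_pos hX3p σ
  have big2 : X ^ s ≤ 1350 * q * (X1 ^ σ * X3 ^ σ) := by
    have h := mul_le_mul_of_nonneg_right big (by positivity : (0:ℝ) ≤ X1 ^ σ * X3 ^ σ)
    calc X ^ s = X ^ s * X1 ^ (-σ) * X3 ^ (-σ) * (X1 ^ σ * X3 ^ σ) := by
          rw [Real.rpow_neg hX1p.le, Real.rpow_neg hX3p.le]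
          field_simp
      _ ≤ 1350 * q * (X1 ^ σ * X3 ^ σ) := h
  -- abs values
  have haA : (1:ℝ) ≤ |(n₁:ℝ) - n| := by
    nlinarith [abs_nonneg ((n₁:ℝ) - n), sq_abs ((n₁:ℝ) - n)]
  have haC : (1:ℝ) ≤ |(n₃:ℝ) - n| := by
    nlinarith [abs_nonneg ((n₃:ℝ) - n), sq_abs ((n₃:ℝ) - n)]
  have hABpos : (0:ℝ) < |(n₁:ℝ) - n| * |(n₃:ℝ) - n| :=
    mul_pos (by linarith) (by linarith)
  have hDpos : (0:ℝ) < 2 * |(n₁:ℝ) - n| * |(n₃:ℝ) - n| * q := by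
    have : (0:ℝ) < 2 * (|(n₁:ℝ) - n| * |(n₃:ℝ) - n|) * q := by positivity
    linarith [this, mul_assoc (2:ℝ) |(n₁:ℝ) - n| |(n₃:ℝ) - n|]
  have hrec : 1/(|(n₁:ℝ) - n| * |(n₃:ℝ) - n|) ≤ 1/GA + 1/GC := by
    have := recip_bound haA haC
    rwa [sq_abs, sq_abs] at this
  calc X ^ s / (2 * |(n₁:ℝ) - n| * |(n₃:ℝ) - n| * q)
      ≤ (1350 * q * (X1 ^ σ * X3 ^ σ)) / (2 * |(n₁:ℝ) - n| * |(n₃:ℝ) - n| * q) :=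
        (div_le_div_iff_of_pos_right hDpos).2 big2
    _ = 675 * (X1 ^ σ * X3 ^ σ) / (|(n₁:ℝ) - n| * |(n₃:ℝ) - n|) := by
        rw [div_eq_div_iff hDpos.ne' hABpos.ne']; ring
    _ = 675 * (X1 ^ σ * X3 ^ σ) * (1/(|(n₁:ℝ) - n| * |(n₃:ℝ) - n|)) := by
        rw [mul_one_div]
    _ ≤ 675 * (X1 ^ σ * X3 ^ σ) * (1/GA + 1/GC) := by
        have hp : (0:ℝ) ≤ 675 * (X1 ^ σ * X3 ^ σ) := by positivity
        exact mul_le_mul_of_nonneg_left hrec hp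
    _ ≤ 2025 * (X1 ^ σ * X3 ^ σ) * (1/GA + 1/GC) := by
        have hR : (0:ℝ) ≤ 1/GA + 1/GC := by positivity
        have h675 : (675:ℝ) * (X1 ^ σ * X3 ^ σ) ≤ 2025 * (X1 ^ σ * X3 ^ σ) :=
          mul_le_mul_of_nonneg_right (by norm_num) (by positivity)
        exact mul_le_mul_of_nonneg_right h675 hR

lemma key2 (s ε σ : ℝ) (hs0 : 0 < s) (hs : s ≤ 1/2) (hε0 : 0 < ε) (hε : ε < s/2)
    (hσ : σ = s - 1/2 - ε)
    (n n₁ n₂ n₃ : ℤ) (h2 : n₂ = n₁ + n₃ - n) (h1 : n₁ ≠ n) (h3 : n₃ ≠ n) :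
    jap n ^ (2*s) / |((phi (n₁, n₂, n₃) n : ℤ) : ℝ)| ≤
      2025 * (jap n₂ ^ (2*σ) * jap n ^ (2*σ)) *
        (1 + ((n₁:ℝ) - n)^2) ^ (-(1+(2*s-4*ε))/2) := by
  obtain ⟨q, hq1, habs, hgn, hga, hgc, hgn₁, hgn₃, hgn₂, hA1, hC1⟩ :=
    phi_setup n n₁ n₂ n₃ h2 h1 h3
  rw [jap_rpow n s, jap_rpow n₂ σ, jap_rpow n σ, habs]
  set δ : ℝ := 2*s - 4*ε with hδ
  have hδ0 : 0 < δ := by rw [hδ]; linarith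
  have hδ1 : δ ≤ 1 := by rw [hδ]; linarith
  set X : ℝ := 1 + (n:ℝ)^2 with hX
  set X2 : ℝ := 1 + (n₂:ℝ)^2 with hX2
  set GA : ℝ := 1 + ((n₁:ℝ) - n)^2 with hGA
  have hq0 : (0:ℝ) < q := by linarith
  have hXp : (0:ℝ) < X := by positivity
  have hX2p : (0:ℝ) < X2 := by positivity
  have hGAp : (0:ℝ) < GA := by positivity
  have hσ0 : 0 ≤ -σ := by rw [hσ]; linarith
  have hσ1 : -σ ≤ 1 := by rw [hσ]; linarith
  have e1 : X ^ (s-σ) ≤ 6 * q ^ (s-σ) :=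
    rpow_fac hXp.le hq1 (by norm_num) hgn (by rw [hσ]; linarith) (by rw [hσ]; linarith)
  have e2 : X2 ^ (-σ) ≤ 28 * q ^ (-σ) := rpow_fac hX2p.le hq1 (by norm_num) hgn₂ hσ0 hσ1
  have e3 : GA ^ (δ/2) ≤ 3 * q ^ (δ/2) :=
    rpow_fac hGAp.le hq1 (by norm_num) hga (by linarith) (by linarith)
  have big : X ^ (s-σ) * X2 ^ (-σ) * GA ^ (δ/2) ≤ 504 * q := by
    have hm : X ^ (s-σ) * X2 ^ (-σ) * GA ^ (δ/2) ≤ (6*q^(s-σ)) * (28*q^(-σ)) * (3*q^(δ/2)) := by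
      have p2 : 0 ≤ X2 ^ (-σ) := (Real.rpow_pos_of_pos hX2p _).le
      have p3 : 0 ≤ GA ^ (δ/2) := (Real.rpow_pos_of_pos hGAp _).le
      exact mul_le_mul (mul_le_mul e1 e2 p2 (by positivity)) e3 p3 (by positivity)
    have hq' : q ^ (s-σ) * q ^ (-σ) * q ^ (δ/2) = q ^ (s-σ + -σ + δ/2) := by
      rw [Real.rpow_add hq0, Real.rpow_add hq0]
    have hqe : q ^ (s-σ + -σ + δ/2) = q := by
      have : s-σ + -σ + δ/2 = 1 := by rw [hδ, hσ]; ring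
      rw [this, Real.rpow_one]
    calc X ^ (s-σ) * X2 ^ (-σ) * GA ^ (δ/2) ≤ (6*q^(s-σ)) * (28*q^(-σ)) * (3*q^(δ/2)) := hm
      _ = 504 * (q ^ (s-σ) * q ^ (-σ) * q ^ (δ/2)) := by ring
      _ = 504 * q := by rw [hq', hqe]
  have c1 : X ^ (s-σ) * X ^ σ = X ^ s := by
    rw [← Real.rpow_add hXp]; congr 1; ring
  have c2 : X2 ^ (-σ) * X2 ^ σ = 1 := by
    rw [← Real.rpow_add hX2p]; simp
  have c3 : GA ^ (δ/2) * GA ^ (-(δ/2)) = 1 := by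
    rw [← Real.rpow_add hGAp]; simp
  have big2 : X ^ s ≤ 504 * q * (X2 ^ σ * X ^ σ * GA ^ (-(δ/2))) := by
    have h := mul_le_mul_of_nonneg_right big
      (by positivity : (0:ℝ) ≤ X2 ^ σ * X ^ σ * GA ^ (-(δ/2)))
    have hid : (X ^ (s-σ) * X2 ^ (-σ) * GA ^ (δ/2)) * (X2 ^ σ * X ^ σ * GA ^ (-(δ/2)))
        = (X ^ (s-σ) * X ^ σ) * ((X2 ^ (-σ) * X2 ^ σ) * (GA ^ (δ/2) * GA ^ (-(δ/2)))) := by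
      ring
    rw [hid, c1, c2, c3, mul_one, mul_one] at h
    exact h
  have haA : (1:ℝ) ≤ |(n₁:ℝ) - n| := by
    nlinarith [abs_nonneg ((n₁:ℝ) - n), sq_abs ((n₁:ℝ) - n)]
  have haC : (1:ℝ) ≤ |(n₃:ℝ) - n| := by
    nlinarith [abs_nonneg ((n₃:ℝ) - n), sq_abs ((n₃:ℝ) - n)]
  have hABpos : (0:ℝ) < |(n₁:ℝ) - n| * |(n₃:ℝ) - n| :=
    mul_pos (by linarith) (by linarith)
  have hDpos : (0:ℝ) < 2 * |(n₁:ℝ) - n| * |(n₃:ℝ) - n| * q := by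
    have : (0:ℝ) < 2 * (|(n₁:ℝ) - n| * |(n₃:ℝ) - n|) * q := by positivity
    linarith [this, mul_assoc (2:ℝ) |(n₁:ℝ) - n| |(n₃:ℝ) - n|]
  -- 1/(|A||C|) ≤ 2 * GA^(-1/2)
  have hGAhalf : GA ^ ((1:ℝ)/2) ≤ 2 * |(n₁:ℝ) - n| := by
    have hle : GA ≤ (2 * |(n₁:ℝ) - n|)^2 := by nlinarith [sq_abs ((n₁:ℝ) - n)]
    have h := Real.rpow_le_rpow hGAp.le hle (by norm_num : (0:ℝ) ≤ 1/2)
    have h2A : (((2 * |(n₁:ℝ) - n|)^2 : ℝ)) ^ ((1:ℝ)/2) = 2 * |(n₁:ℝ) - n| := by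
      rw [← Real.rpow_natCast (2 * |(n₁:ℝ) - n|) 2, ← Real.rpow_mul (by positivity)]
      norm_num
    rwa [h2A] at h
  have hGAhp : (0:ℝ) < GA ^ ((1:ℝ)/2) := Real.rpow_pos_of_pos hGAp _
  have hrec2 : 1/(|(n₁:ℝ) - n| * |(n₃:ℝ) - n|) ≤ 2 * GA ^ (-((1:ℝ)/2)) := by
    have s1 : 1/(|(n₁:ℝ) - n| * |(n₃:ℝ) - n|) ≤ 1/|(n₁:ℝ) - n| := by
      apply one_div_le_one_div_of_le (by linarith)
      nlinarith
    have s2 : 1/|(n₁:ℝ) - n| ≤ 2 / GA ^ ((1:ℝ)/2) := by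
      rw [div_le_div_iff₀ (by linarith) hGAhp]
      linarith
    have s3 : (2:ℝ) / GA ^ ((1:ℝ)/2) = 2 * GA ^ (-((1:ℝ)/2)) := by
      rw [Real.rpow_neg hGAp.le, div_eq_mul_inv]
    linarith [s1, s2, s3.le, s3.ge]
  have cGA : GA ^ (-(δ/2)) * GA ^ (-((1:ℝ)/2)) = GA ^ (-(1+δ)/2) := by
    rw [← Real.rpow_add hGAp]; congr 1; ring
  calc X ^ s / (2 * |(n₁:ℝ) - n| * |(n₃:ℝ) - n| * q)
      ≤ (504 * q * (X2 ^ σ * X ^ σ * GA ^ (-(δ/2)))) / (2 * |(n₁:ℝ) - n| * |(n₃:ℝ) - n| * q) :=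
        (div_le_div_iff_of_pos_right hDpos).2 big2
    _ = 252 * (X2 ^ σ * X ^ σ) * GA ^ (-(δ/2)) * (1/(|(n₁:ℝ) - n| * |(n₃:ℝ) - n|)) := by
        rw [mul_one_div, div_eq_div_iff hDpos.ne' hABpos.ne']; ring
    _ ≤ 252 * (X2 ^ σ * X ^ σ) * GA ^ (-(δ/2)) * (2 * GA ^ (-((1:ℝ)/2))) := by
        exact mul_le_mul_of_nonneg_left hrec2 (by positivity)
    _ = 504 * (X2 ^ σ * X ^ σ) * (GA ^ (-(δ/2)) * GA ^ (-((1:ℝ)/2))) := by ring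
    _ = 504 * (X2 ^ σ * X ^ σ) * GA ^ (-(1+δ)/2) := by rw [cGA]
    _ ≤ 2025 * (X2 ^ σ * X ^ σ) * GA ^ (-(1+δ)/2) := by
        have : (504:ℝ) * (X2 ^ σ * X ^ σ) ≤ 2025 * (X2 ^ σ * X ^ σ) :=
          mul_le_mul_of_nonneg_right (by norm_num) (by positivity)
        exact mul_le_mul_of_nonneg_right this (by positivity)

open scoped ENNReal NNReal

lemma tsum_shift' (f : ℤ → ℝ≥0∞) (k : ℤ) : ∑' (n : ℤ), f (k - n) = ∑' m, f m := by
  simpa using (Equiv.subLeft k).tsum_eq f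

lemma tsum_shift (f : ℤ → ℝ≥0∞) (n : ℤ) : ∑' (k : ℤ), f (k - n) = ∑' m, f m := by
  simpa using (Equiv.subRight n).tsum_eq f

lemma D1 (f g : ℤ → ℝ≥0∞) :
    ∑' (n : ℤ), ∑' (k : ℤ), f (k - n) * g k = (∑' m, f m) * (∑' m, g m) := by
  rw [ENNReal.tsum_comm]
  calc ∑' (k : ℤ), ∑' (n : ℤ), f (k-n) * g k
      = ∑' (k : ℤ), (∑' (n : ℤ), f (k-n)) * g k := by
        exact tsum_congr fun k => ENNReal.tsum_mul_right.symm ▸ ENNReal.tsum_mul_right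
    _ = ∑' (k : ℤ), (∑' m, f m) * g k := by
        exact tsum_congr fun k => by rw [tsum_shift' f k]
    _ = (∑' m, f m) * ∑' m, g m := ENNReal.tsum_mul_left

lemma triple1 (f g : ℤ → ℝ≥0∞) :
    ∑' (n : ℤ), ∑' (k : ℤ), ∑' (l : ℤ), f (k-n) * g k * g l
      = (∑' m, f m) * (∑' m, g m) * (∑' m, g m) := by
  calc ∑' (n : ℤ), ∑' (k : ℤ), ∑' (l : ℤ), f (k-n) * g k * g l
      = ∑' (n : ℤ), ∑' (k : ℤ), (f (k-n) * g k) * ∑' m, g m := by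
        exact tsum_congr fun n => tsum_congr fun k => ENNReal.tsum_mul_left
    _ = (∑' (n : ℤ), ∑' (k : ℤ), f (k-n) * g k) * ∑' m, g m := by
        rw [← ENNReal.tsum_mul_right]
        exact tsum_congr fun n => ENNReal.tsum_mul_right
    _ = (∑' m, f m) * (∑' m, g m) * (∑' m, g m) := by rw [D1 f g]

lemma triple2 (f g : ℤ → ℝ≥0∞) :
    ∑' (n : ℤ), ∑' (k : ℤ), ∑' (l : ℤ), f (l-n) * g k * g l
      = (∑' m, f m) * (∑' m, g m) * (∑' m, g m) := by
  calc ∑' (n : ℤ), ∑' (k : ℤ), ∑' (l : ℤ), f (l-n) * g k * g l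
      = ∑' (n : ℤ), ∑' (l : ℤ), ∑' (k : ℤ), f (l-n) * g l * g k := by
        exact tsum_congr fun n =>
          ENNReal.tsum_comm.trans (tsum_congr fun l => tsum_congr fun k => by ring)
    _ = (∑' m, f m) * (∑' m, g m) * (∑' m, g m) := triple1 f g

lemma triple3 (f g h : ℤ → ℝ≥0∞) :
    ∑' (n : ℤ), ∑' (k : ℤ), ∑' (l : ℤ), f (k-n) * g l * h n
      = (∑' m, f m) * (∑' m, g m) * (∑' m, h m) := by
  calc ∑' (n : ℤ), ∑' (k : ℤ), ∑' (l : ℤ), f (k-n) * g l * h n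
      = ∑' (n : ℤ), ∑' (k : ℤ), (f (k-n) * h n) * ∑' m, g m := by
        refine tsum_congr fun n => tsum_congr fun k => ?_
        rw [← ENNReal.tsum_mul_left]
        exact tsum_congr fun l => by ring
    _ = ∑' (n : ℤ), ((∑' (k : ℤ), f (k-n)) * h n) * ∑' m, g m := by
        refine tsum_congr fun n => ?_
        rw [ENNReal.tsum_mul_right, ENNReal.tsum_mul_right]
    _ = ∑' (n : ℤ), ((∑' m, f m) * h n) * ∑' m, g m := by
        refine tsum_congr fun n => ?_
        rw [tsum_shift f n]
    _ = ((∑' m, f m) * ∑' m, h m) * ∑' m, g m := by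
        rw [ENNReal.tsum_mul_right, ENNReal.tsum_mul_left]
    _ = (∑' m, f m) * (∑' m, g m) * (∑' m, h m) := by ring

lemma tsum3_add (F G : ℤ → ℤ → ℤ → ℝ≥0∞) :
    ∑' (n : ℤ), ∑' (k : ℤ), ∑' (l : ℤ), (F n k l + G n k l)
      = (∑' (n : ℤ), ∑' (k : ℤ), ∑' (l : ℤ), F n k l)
        + ∑' (n : ℤ), ∑' (k : ℤ), ∑' (l : ℤ), G n k l := by
  rw [← ENNReal.tsum_add]
  refine tsum_congr fun n => ?_
  rw [← ENNReal.tsum_add]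
  exact tsum_congr fun k => ENNReal.tsum_add

lemma amgm (a b : ℝ≥0∞) : a * b ≤ a^2 + b^2 := by
  rcases le_total a b with h|h
  · calc a*b ≤ b*b := mul_le_mul_left h b
      _ = b^2 := (sq b).symm
      _ ≤ a^2 + b^2 := le_add_self
  · calc a*b ≤ a*a := mul_le_mul_right h a
      _ = a^2 := (sq a).symm
      _ ≤ a^2 + b^2 := self_le_add_right _ _

lemma G2r_summable {δ : ℝ} (hδ0 : 0 < δ) :
    Summable (fun m : ℤ => (1 + (m:ℝ)^2) ^ (-(1+δ)/2)) := by
  have h1δ : (0:ℝ) < 1 + δ := by linarith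
  have hnat : Summable (fun n : ℕ => ((n:ℝ)+1) ^ (-(1+δ))) := by
    have h0 : Summable (fun n : ℕ => ((n:ℝ)) ^ (-(1+δ))) :=
      Real.summable_nat_rpow.2 (by linarith)
    have h1 := (summable_nat_add_iff 1).2 h0
    refine h1.congr fun n => ?_
    push_cast
    ring_nf
  have hkey : ∀ n : ℕ, (1 + ((n:ℤ):ℝ)^2) ^ (-(1+δ)/2) ≤ 2 ^ ((1+δ)/2) * (((n:ℝ)+1) ^ (-(1+δ))) := by
    intro n
    set z : ℝ := (n:ℝ) + 1 with hz
    have hz0 : (0:ℝ) < z := by positivity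
    set y : ℝ := 1 + ((n:ℤ):ℝ)^2 with hy
    have hy0 : (0:ℝ) < y := by positivity
    have hyz : z^2 ≤ 2*y := by
      rw [hy, hz]; push_cast; nlinarith [sq_nonneg ((n:ℝ) - 1)]
    have hz2 : z ^ (1+δ) ≤ 2 ^ ((1+δ)/2) * y ^ ((1+δ)/2) := by
      have e1 : z ^ (1+δ) = (z^2) ^ ((1+δ)/2) := by
        rw [← Real.rpow_natCast z 2, ← Real.rpow_mul hz0.le]
        congr 1
        push_cast
        ring
      rw [e1, ← Real.mul_rpow (by norm_num) hy0.le]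
      exact Real.rpow_le_rpow (by positivity) hyz (by positivity)
    have hyp : (0:ℝ) < y ^ ((1+δ)/2) := Real.rpow_pos_of_pos hy0 _
    have hzp : (0:ℝ) < z ^ (1+δ) := Real.rpow_pos_of_pos hz0 _
    have h2p : (0:ℝ) < (2:ℝ) ^ ((1+δ)/2) := Real.rpow_pos_of_pos (by norm_num) _
    rw [show -(1+δ)/2 = -((1+δ)/2) by ring, Real.rpow_neg hy0.le, Real.rpow_neg hz0.le]
    have hfrac : z ^ (1+δ) / 2 ^ ((1+δ)/2) ≤ y ^ ((1+δ)/2) :=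
      (div_le_iff₀ h2p).2 (hz2.trans_eq (mul_comm _ _))
    calc (y ^ ((1+δ)/2))⁻¹ ≤ (z ^ (1+δ) / 2 ^ ((1+δ)/2))⁻¹ := by
          exact inv_anti₀ (by positivity) hfrac
      _ = 2 ^ ((1+δ)/2) * (z ^ (1+δ))⁻¹ := by rw [inv_div, div_eq_mul_inv]
  have hnat2 : Summable (fun n : ℕ => (1 + ((n:ℤ):ℝ)^2) ^ (-(1+δ)/2)) := by
    apply Summable.of_nonneg_of_le (fun n => by positivity) hkey
    exact hnat.mul_left _
  apply Summable.of_nat_of_neg hnat2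
  refine hnat2.congr fun n => ?_
  push_cast
  ring_nf


lemma jap_nonneg (m : ℤ) : 0 ≤ jap m := Real.rpow_nonneg (by positivity) _


/-- The boundary term bound `|N₀⁽²⁾(v)| ≲ ‖v‖⁴_{H^σ}`: for `0 < s ≤ 1/2`,
`0 < ε < s/2` and `σ = s − 1/2 − ε`, there is `C > 0` such that, for all sums in `[0,∞]`,
`Σ_n Σ_{Γ(n)} (⟨n⟩^{2s}/|φ|)·|v(n₁)||v(n₂)||v(n₃)||v(n)| ≤ C‖v‖⁴_{H^σ}`. -/
theorem boundary_term_quadrilinear_bound (s ε σ : ℝ)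
    (hs0 : 0 < s) (hs : s ≤ 1 / 2) (hε0 : 0 < ε) (hε : ε < s / 2)
    (hσ : σ = s - 1 / 2 - ε) :
    ∃ C : ℝ, 0 < C ∧ ∀ v : ℤ → ℂ,
      ∑' (n : ℤ) (p : Gamma n),
          ENNReal.ofReal (jap n ^ (2 * s) / |(phi p.1 n : ℝ)|)
            * (‖v p.1.1‖₊ : ℝ≥0∞) * (‖v p.1.2.1‖₊ : ℝ≥0∞)
            * (‖v p.1.2.2‖₊ : ℝ≥0∞) * (‖v n‖₊ : ℝ≥0∞)
        ≤ ENNReal.ofReal C *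
            (∑' m : ℤ, ENNReal.ofReal (jap m ^ (2 * σ)) * (‖v m‖₊ : ℝ≥0∞) ^ 2) ^ 2 := by
  have hδ0 : 0 < 2*s - 4*ε := by linarith
  have hδ1 : 2*s - 4*ε ≤ 1 := by linarith
  set G2 : ℤ → ℝ≥0∞ := fun m => ENNReal.ofReal ((1 + (m:ℝ)^2) ^ (-(1+(2*s-4*ε))/2)) with hG2
  have hsum : Summable (fun m : ℤ => (1 + (m:ℝ)^2) ^ (-(1+(2*s-4*ε))/2)) := G2r_summable hδ0
  set A2 : ℝ≥0∞ := ∑' m, G2 m with hA2def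
  have hA2 : A2 ≠ ⊤ := by
    rw [hA2def, hG2, ← ENNReal.ofReal_tsum_of_nonneg (fun m => by positivity) hsum]
    exact ENNReal.ofReal_ne_top
  refine ⟨6075 * (A2.toReal + 1), by positivity, fun v => ?_⟩
  set x : ℤ → ℝ≥0∞ := fun m => ((‖v m‖₊ : ℝ≥0∞)) with hx
  set w : ℤ → ℝ≥0∞ := fun m => ENNReal.ofReal (jap m ^ (2*σ)) * x m ^ 2 with hw
  set B : ℝ≥0∞ := ∑' m, w m with hB
  set c8 : ℝ≥0∞ := ENNReal.ofReal 2025 with hc8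
  have hG1le : ∀ m : ℤ, ENNReal.ofReal (1/(1 + (m:ℝ)^2)) ≤ G2 m := by
    intro m
    apply ENNReal.ofReal_le_ofReal
    rw [one_div, ← Real.rpow_neg_one (1 + (m:ℝ)^2)]
    exact Real.rpow_le_rpow_of_exponent_le (by nlinarith [sq_nonneg ((m:ℝ))]) (by linarith)
  have hinner : ∀ n : ℤ,
      (∑' (p : Gamma n), ENNReal.ofReal (jap n ^ (2 * s) / |(phi p.1 n : ℝ)|)
          * x p.1.1 * x p.1.2.1 * x p.1.2.2 * x n)
        ≤ (∑' (k : ℤ), ∑' (l : ℤ), c8 * (G2 (k-n) + G2 (l-n)) * w k * w l)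
          + ∑' (k : ℤ), ∑' (l : ℤ), c8 * G2 (k-n) * w l * w n := by
    intro n
    set F1 : ℤ × ℤ → ℝ≥0∞ := fun kl => c8 * (G2 (kl.1-n) + G2 (kl.2-n)) * w kl.1 * w kl.2 with hF1
    set F2 : ℤ × ℤ → ℝ≥0∞ := fun kl => c8 * G2 (kl.1-n) * w kl.2 * w n with hF2
    have hptwise : ∀ p : Gamma n,
        ENNReal.ofReal (jap n ^ (2 * s) / |(phi p.1 n : ℝ)|)
            * x p.1.1 * x p.1.2.1 * x p.1.2.2 * x n
          ≤ F1 (p.1.1, p.1.2.2) + F2 (p.1.1, p.1.2.1) := by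
      rintro ⟨⟨n₁, n₂, n₃⟩, hp⟩
      obtain ⟨hpa, hpb, hpc⟩ := hp
      have hpa' : n = n₁ - n₂ + n₃ := hpa
      have hpb' : n₁ ≠ n := hpb
      have hpc' : n₃ ≠ n := hpc
      have h2 : n₂ = n₁ + n₃ - n := by omega
      set W : ℝ≥0∞ := ENNReal.ofReal (jap n ^ (2 * s) / |(phi (n₁, n₂, n₃) n : ℝ)|) with hW
      have hcast1 : ((n₁ - n : ℤ):ℝ) = (n₁:ℝ) - (n:ℝ) := by push_cast; ring
      have hcast3 : ((n₃ - n : ℤ):ℝ) = (n₃:ℝ) - (n:ℝ) := by push_cast; ring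
      have hY1 : (0:ℝ) ≤ jap n₁ ^ (2*σ) := Real.rpow_nonneg (jap_nonneg n₁) _
      have hY2 : (0:ℝ) ≤ jap n₂ ^ (2*σ) := Real.rpow_nonneg (jap_nonneg n₂) _
      have hY3 : (0:ℝ) ≤ jap n₃ ^ (2*σ) := Real.rpow_nonneg (jap_nonneg n₃) _
      have hY1' : (0:ℝ) ≤ jap n ^ (2*σ) := Real.rpow_nonneg (jap_nonneg n) _
      have hb1 : W * (x n₁^2 * x n₃^2) ≤ F1 (n₁, n₃) := by
        have hWle : W ≤ c8 * (ENNReal.ofReal (jap n₁ ^ (2*σ)) * ENNReal.ofReal (jap n₃ ^ (2*σ)))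
            * (G2 (n₁ - n) + G2 (n₃ - n)) := by
          calc W ≤ ENNReal.ofReal (2025 * (jap n₁ ^ (2*σ) * jap n₃ ^ (2*σ))
                * (1/(1 + ((n₁:ℝ) - n)^2) + 1/(1 + ((n₃:ℝ) - n)^2))) :=
                ENNReal.ofReal_le_ofReal (key1 s ε σ hs0 hs hε0 hε hσ n n₁ n₂ n₃ h2 hpb' hpc')
            _ = c8 * (ENNReal.ofReal (jap n₁ ^ (2*σ)) * ENNReal.ofReal (jap n₃ ^ (2*σ)))
                * (ENNReal.ofReal (1/(1 + ((n₁:ℝ) - n)^2))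
                   + ENNReal.ofReal (1/(1 + ((n₃:ℝ) - n)^2))) := by
                rw [ENNReal.ofReal_mul (mul_nonneg (by norm_num) (mul_nonneg hY1 hY3)),
                  ENNReal.ofReal_add (by positivity) (by positivity),
                  ENNReal.ofReal_mul (by norm_num : (0:ℝ) ≤ 2025), ENNReal.ofReal_mul hY1, hc8]
            _ ≤ c8 * (ENNReal.ofReal (jap n₁ ^ (2*σ)) * ENNReal.ofReal (jap n₃ ^ (2*σ)))
                * (G2 (n₁ - n) + G2 (n₃ - n)) := by
                apply mul_le_mul_right
                apply add_le_add
                · have h := hG1le (n₁ - n); rw [hcast1] at h; exact h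
                · have h := hG1le (n₃ - n); rw [hcast3] at h; exact h
        calc W * (x n₁^2 * x n₃^2)
            ≤ (c8 * (ENNReal.ofReal (jap n₁ ^ (2*σ)) * ENNReal.ofReal (jap n₃ ^ (2*σ)))
              * (G2 (n₁ - n) + G2 (n₃ - n))) * (x n₁^2 * x n₃^2) := mul_le_mul_left hWle _
          _ = F1 (n₁, n₃) := by simp only [hF1, hw]; ring
      have hb2 : W * (x n₂^2 * x n^2) ≤ F2 (n₁, n₂) := by
        have hWle : W ≤ c8 * (ENNReal.ofReal (jap n₂ ^ (2*σ)) * ENNReal.ofReal (jap n ^ (2*σ)))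
            * G2 (n₁ - n) := by
          calc W ≤ ENNReal.ofReal (2025 * (jap n₂ ^ (2*σ) * jap n ^ (2*σ))
                * (1 + ((n₁:ℝ) - n)^2) ^ (-(1+(2*s-4*ε))/2)) :=
                ENNReal.ofReal_le_ofReal (key2 s ε σ hs0 hs hε0 hε hσ n n₁ n₂ n₃ h2 hpb' hpc')
            _ = c8 * (ENNReal.ofReal (jap n₂ ^ (2*σ)) * ENNReal.ofReal (jap n ^ (2*σ)))
                * G2 (n₁ - n) := by
                rw [ENNReal.ofReal_mul (mul_nonneg (by norm_num) (mul_nonneg hY2 hY1')),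
                  ENNReal.ofReal_mul (by norm_num : (0:ℝ) ≤ 2025), ENNReal.ofReal_mul hY2, hc8,
                  hG2]
                congr 2
                rw [hcast1]
        calc W * (x n₂^2 * x n^2)
            ≤ (c8 * (ENNReal.ofReal (jap n₂ ^ (2*σ)) * ENNReal.ofReal (jap n ^ (2*σ)))
              * G2 (n₁ - n)) * (x n₂^2 * x n^2) := mul_le_mul_left hWle _
          _ = F2 (n₁, n₂) := by simp only [hF2, hw]; ring
      calc W * x n₁ * x n₂ * x n₃ * x n
          = W * ((x n₁ * x n₃) * (x n₂ * x n)) := by ring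
        _ ≤ W * ((x n₁ * x n₃)^2 + (x n₂ * x n)^2) := mul_le_mul_right (amgm _ _) W
        _ = W * (x n₁^2 * x n₃^2) + W * (x n₂^2 * x n^2) := by ring
        _ ≤ F1 (n₁, n₃) + F2 (n₁, n₂) := add_le_add hb1 hb2
    have hinj1 : Function.Injective (fun p : Gamma n => (p.1.1, p.1.2.2)) := by
      rintro ⟨⟨a₁, a₂, a₃⟩, ha⟩ ⟨⟨b₁, b₂, b₃⟩, hb⟩ h
      simp only [Prod.mk.injEq] at h
      obtain ⟨h1, h3⟩ := h
      have ha1 : n = a₁ - a₂ + a₃ := ha.1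
      have hb1 : n = b₁ - b₂ + b₃ := hb.1
      apply Subtype.ext
      simp only [Prod.mk.injEq]
      exact ⟨h1, by omega, h3⟩
    have hinj2 : Function.Injective (fun p : Gamma n => (p.1.1, p.1.2.1)) := by
      rintro ⟨⟨a₁, a₂, a₃⟩, ha⟩ ⟨⟨b₁, b₂, b₃⟩, hb⟩ h
      simp only [Prod.mk.injEq] at h
      obtain ⟨h1, h2'⟩ := h
      have ha1 : n = a₁ - a₂ + a₃ := ha.1
      have hb1 : n = b₁ - b₂ + b₃ := hb.1
      apply Subtype.ext
      simp only [Prod.mk.injEq]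
      exact ⟨h1, h2', by omega⟩
    calc (∑' (p : Gamma n), ENNReal.ofReal (jap n ^ (2 * s) / |(phi p.1 n : ℝ)|)
            * x p.1.1 * x p.1.2.1 * x p.1.2.2 * x n)
        ≤ ∑' (p : Gamma n), (F1 (p.1.1, p.1.2.2) + F2 (p.1.1, p.1.2.1)) :=
          ENNReal.tsum_le_tsum hptwise
      _ = (∑' (p : Gamma n), F1 (p.1.1, p.1.2.2)) + ∑' (p : Gamma n), F2 (p.1.1, p.1.2.1) :=
          ENNReal.tsum_add
      _ ≤ (∑' kl : ℤ × ℤ, F1 kl) + ∑' kl : ℤ × ℤ, F2 kl :=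
          add_le_add (ENNReal.tsum_comp_le_tsum_of_injective hinj1 F1)
            (ENNReal.tsum_comp_le_tsum_of_injective hinj2 F2)
      _ = (∑' (k : ℤ), ∑' (l : ℤ), c8 * (G2 (k-n) + G2 (l-n)) * w k * w l)
          + ∑' (k : ℤ), ∑' (l : ℤ), c8 * G2 (k-n) * w l * w n := by
          rw [ENNReal.tsum_prod', ENNReal.tsum_prod']
  -- now sum over n
  have hT1 : ∑' (n : ℤ), ∑' (k : ℤ), ∑' (l : ℤ), c8 * (G2 (k-n) + G2 (l-n)) * w k * w l
      = c8 * (A2 * B * B) + c8 * (A2 * B * B) := by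
    have hsplit : ∀ n k l : ℤ, c8 * (G2 (k-n) + G2 (l-n)) * w k * w l
        = c8 * (G2 (k-n) * w k * w l) + c8 * (G2 (l-n) * w k * w l) := fun n k l => by ring
    calc ∑' (n : ℤ), ∑' (k : ℤ), ∑' (l : ℤ), c8 * (G2 (k-n) + G2 (l-n)) * w k * w l
        = (∑' (n : ℤ), ∑' (k : ℤ), ∑' (l : ℤ), c8 * (G2 (k-n) * w k * w l))
          + ∑' (n : ℤ), ∑' (k : ℤ), ∑' (l : ℤ), c8 * (G2 (l-n) * w k * w l) := by
          rw [← tsum3_add]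
          exact tsum_congr fun n => tsum_congr fun k => tsum_congr fun l => hsplit n k l
      _ = c8 * (∑' (n : ℤ), ∑' (k : ℤ), ∑' (l : ℤ), G2 (k-n) * w k * w l)
          + c8 * (∑' (n : ℤ), ∑' (k : ℤ), ∑' (l : ℤ), G2 (l-n) * w k * w l) := by
          rw [← ENNReal.tsum_mul_left, ← ENNReal.tsum_mul_left]
          congr 1 <;> exact tsum_congr fun n => by
            rw [← ENNReal.tsum_mul_left]
            exact tsum_congr fun k => by rw [← ENNReal.tsum_mul_left]
      _ = c8 * (A2 * B * B) + c8 * (A2 * B * B) := by rw [triple1 G2 w, triple2 G2 w]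
  have hT2 : ∑' (n : ℤ), ∑' (k : ℤ), ∑' (l : ℤ), c8 * G2 (k-n) * w l * w n
      = c8 * (A2 * B * B) := by
    calc ∑' (n : ℤ), ∑' (k : ℤ), ∑' (l : ℤ), c8 * G2 (k-n) * w l * w n
        = c8 * ∑' (n : ℤ), ∑' (k : ℤ), ∑' (l : ℤ), G2 (k-n) * w l * w n := by
          rw [← ENNReal.tsum_mul_left]
          exact tsum_congr fun n => by
            rw [← ENNReal.tsum_mul_left]
            exact tsum_congr fun k => by
              rw [← ENNReal.tsum_mul_left]
              exact tsum_congr fun l => by ring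
      _ = c8 * (A2 * B * B) := by rw [triple3 G2 w w]
  have htotal : (∑' (n : ℤ) (p : Gamma n),
        ENNReal.ofReal (jap n ^ (2 * s) / |(phi p.1 n : ℝ)|)
          * x p.1.1 * x p.1.2.1 * x p.1.2.2 * x n)
      ≤ 3 * (c8 * A2) * B^2 := by
    calc (∑' (n : ℤ) (p : Gamma n), ENNReal.ofReal (jap n ^ (2 * s) / |(phi p.1 n : ℝ)|)
          * x p.1.1 * x p.1.2.1 * x p.1.2.2 * x n)
        ≤ ∑' (n : ℤ), ((∑' (k : ℤ), ∑' (l : ℤ), c8 * (G2 (k-n) + G2 (l-n)) * w k * w l)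
            + ∑' (k : ℤ), ∑' (l : ℤ), c8 * G2 (k-n) * w l * w n) :=
          ENNReal.tsum_le_tsum hinner
      _ = (∑' (n : ℤ), ∑' (k : ℤ), ∑' (l : ℤ), c8 * (G2 (k-n) + G2 (l-n)) * w k * w l)
          + ∑' (n : ℤ), ∑' (k : ℤ), ∑' (l : ℤ), c8 * G2 (k-n) * w l * w n :=
          ENNReal.tsum_add
      _ = (c8 * (A2 * B * B) + c8 * (A2 * B * B)) + c8 * (A2 * B * B) := by rw [hT1, hT2]
      _ = 3 * (c8 * A2) * B^2 := by ring
  refine htotal.trans ?_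
  have hfin : 3 * (c8 * A2) ≤ ENNReal.ofReal (6075 * (A2.toReal + 1)) := by
    have h3 : (3:ℝ≥0∞) = ENNReal.ofReal 3 := by norm_num
    have hA2le : A2 ≤ ENNReal.ofReal (A2.toReal + 1) := by
      conv_lhs => rw [← ENNReal.ofReal_toReal hA2]
      exact ENNReal.ofReal_le_ofReal (by linarith)
    calc 3 * (c8 * A2) ≤ 3 * (c8 * ENNReal.ofReal (A2.toReal + 1)) := by
          exact mul_le_mul_right (mul_le_mul_right hA2le c8) 3
      _ = ENNReal.ofReal 3 * (ENNReal.ofReal 2025 * ENNReal.ofReal (A2.toReal + 1)) := by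
          rw [h3, hc8]
      _ = ENNReal.ofReal (6075 * (A2.toReal + 1)) := by
          rw [← ENNReal.ofReal_mul (by norm_num), ← ENNReal.ofReal_mul (by norm_num)]
          congr 1
          ring
  exact mul_le_mul_left hfin (B^2)
end

section
/- Let 1/4 < s ≤ 1/2, let 0 < ε < (4s−1)/6, and set σ = s − 1/2 − ε. Then there exists a constant C > 0 such that for every v : ℤ → ℂ and for each of the four choices of distinguished position b ∈ {n₁, n₂, n₃, n}, one has (with all sums taken in [0,∞]) Σ_{n∈ℤ} Σ_{(n₁,n₂,n₃)∈Γ(n)} (⟨n⟩^{2s} / |φ(n₁,n₂,n₃,n)|) · |v(n_b)|² · |v(n₁)| |v(n₂)| |v(n₃)| |v(n)| ≤ C · (Σ_{m∈ℤ} ⟨m⟩^{2σ} |v(m)|²)³. -/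
open scoped ENNReal NNReal

/-!
Write `n₁ = n + x`, `n₃ = n + y`, so `n₂ = n + x + y` and `x, y ≠ 0` on `Γ(n)`. Then
`φ = -2xy·Q` with `6Q = (6n + 3x + 3y)² + 3x² + 3y²`, so `1 + m² ≤ 3Q` for each of the four
frequencies and for `m = x`, and `|φ| ≳ ⟨x⟩ Q`. With `τ = -2σ ≥ 0` and `δ = 4s - 1 - 6ε > 0` one has
`2s + 3τ + δ = 2`, hence `⟨n⟩^{2s} ⟨a⟩^τ ⟨b⟩^τ ⟨c⟩^τ / |φ| ≲ ⟨x⟩^{-1-δ}` for any three of the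
four frequencies. Bound `|v(n_b)|²` by `⟨n_b⟩^τ ‖v‖²_{H^σ}` and
`|v(n₁) v(n₂) v(n₃) v(n)| ≤ |v(n₁) v(n₂)|² + |v(n₃) v(n)|²`; each resulting sum factors as
`‖v‖⁴_{H^σ} · Σ_x ⟨x⟩^{-1-δ}`, which is finite since `1 + δ > 1`.
-/

def phiQuadratic (n x y : ℤ) : ℤ :=
  6 * n ^ 2 + 6 * n * (x + y) + 2 * x ^ 2 + 3 * x * y + 2 * y ^ 2

lemma phi_add_add (n x y : ℤ) :
    phi (n + x, n + x + y, n + y) n = -(2 * x * y) * phiQuadratic n x y := by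
  simp only [phi, phiQuadratic]; ring

lemma six_mul_phiQuadratic (n x y : ℤ) :
    6 * phiQuadratic n x y = (6 * n + 3 * x + 3 * y) ^ 2 + 3 * x ^ 2 + 3 * y ^ 2 := by
  simp only [phiQuadratic]; ring

lemma one_add_sq_le_three_mul_phiQuadratic {n x y m : ℤ} (hx : x ≠ 0) (hy : y ≠ 0)
    (hm : m ∈ ({n, n + x, n + y, n + x + y, x} : Finset ℤ)) :
    1 + m ^ 2 ≤ 3 * phiQuadratic n x y := by
  have hQ := six_mul_phiQuadratic n x y
  have hx1 : 1 ≤ x ^ 2 := (one_le_sq_iff_one_le_abs _).2 (Int.one_le_abs hx)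
  have hy1 : 1 ≤ y ^ 2 := (one_le_sq_iff_one_le_abs _).2 (Int.one_le_abs hy)
  simp only [Finset.mem_insert, Finset.mem_singleton] at hm
  rcases hm with h | h | h | h | h <;> rw [h] <;>
    nlinarith [sq_nonneg (6 * n + 3 * x + 3 * y + 3 * x), sq_nonneg (6 * n + 3 * x + 3 * y + 3 * y),
      sq_nonneg (6 * n + 3 * x + 3 * y - 3 * x), sq_nonneg (6 * n + 3 * x + 3 * y - 3 * y),
      sq_nonneg (x - y), sq_nonneg (x + y)]

lemma mem_Gamma_iff {n : ℤ} {p : ℤ × ℤ × ℤ} :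
    p ∈ Gamma n ↔ ∃ x y, x ≠ 0 ∧ y ≠ 0 ∧ p = (n + x, n + x + y, n + y) := by
  obtain ⟨a, b, c⟩ := p
  simp only [Gamma, Set.mem_ofPred_eq, Prod.mk.injEq]
  constructor
  · rintro ⟨h, ha, hc⟩
    exact ⟨a - n, c - n, sub_ne_zero.2 ha, sub_ne_zero.2 hc, by omega, by omega, by omega⟩
  · rintro ⟨x, y, hx, hy, rfl, rfl, rfl⟩
    omega

lemma jap_eq_sqrt (m : ℤ) : jap m = √(1 + (m : ℝ) ^ 2) := (Real.sqrt_eq_rpow _).symm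

lemma jap_pos (m : ℤ) : 0 < jap m := by rw [jap_eq_sqrt]; positivity

lemma jap_rpow_pos (m : ℤ) (e : ℝ) : 0 < jap m ^ e := Real.rpow_pos_of_pos (jap_pos m) e

lemma abs_le_jap (m : ℤ) : |(m : ℝ)| ≤ jap m := by
  rw [jap_eq_sqrt]; exact Real.abs_le_sqrt (by linarith)

lemma jap_le_two_mul_abs {m : ℤ} (hm : m ≠ 0) : jap m ≤ 2 * |(m : ℝ)| := by
  have : (1 : ℝ) ≤ (m : ℝ) ^ 2 := by
    exact_mod_cast (one_le_sq_iff_one_le_abs _).2 (Int.one_le_abs hm)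
  rw [jap_eq_sqrt, Real.sqrt_le_iff, mul_pow, sq_abs]
  exact ⟨by positivity, by linarith⟩

lemma jap_rpow_le {m : ℤ} {R e : ℝ} (hm : 1 + (m : ℝ) ^ 2 ≤ R) (he : 0 ≤ e) :
    jap m ^ e ≤ R ^ (e / 2) := by
  rw [jap, ← Real.rpow_mul (by positivity), one_div_mul_eq_div]
  exact Real.rpow_le_rpow (by positivity) hm (by positivity)

lemma prod_jap_rpow_le {ι : Type*} (t : Finset ι) (m : ι → ℤ) (e : ι → ℝ) {R : ℝ} (hR : 0 < R)
    (he : ∀ i ∈ t, 0 ≤ e i) (hm : ∀ i ∈ t, 1 + (m i : ℝ) ^ 2 ≤ R) :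
    ∏ i ∈ t, jap (m i) ^ e i ≤ R ^ ((∑ i ∈ t, e i) / 2) := by
  calc ∏ i ∈ t, jap (m i) ^ e i
      ≤ ∏ i ∈ t, R ^ (e i / 2) :=
        Finset.prod_le_prod (fun i _ => (jap_rpow_pos _ _).le) fun i hi =>
          jap_rpow_le (hm i hi) (he i hi)
    _ = R ^ ((∑ i ∈ t, e i) / 2) := by rw [Finset.sum_div, Real.rpow_sum_of_pos hR]

lemma summable_jap_rpow_neg {ρ : ℝ} (hρ : 1 < ρ) : Summable fun m : ℤ => jap m ^ (-ρ) := by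
  refine (Real.summable_abs_int_rpow hρ).of_norm_bounded_eventually ?_
  filter_upwards [Filter.eventually_cofinite_ne 0] with m hm
  rw [Real.norm_of_nonneg (jap_rpow_pos m _).le]
  exact Real.rpow_le_rpow_of_nonpos (by positivity) (abs_le_jap m) (by linarith)

lemma jap_mul_le_abs_phi {n x y : ℤ} (hx : x ≠ 0) (hy : y ≠ 0) :
    jap x * phiQuadratic n x y ≤ |(phi (n + x, n + x + y, n + y) n : ℝ)| := by
  have hQ : (0 : ℝ) ≤ phiQuadratic n x y := by
    have := six_mul_phiQuadratic n x y
    exact_mod_cast (by nlinarith [sq_nonneg (6 * n + 3 * x + 3 * y)] : 0 ≤ phiQuadratic n x y)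
  have hy1 : (1 : ℝ) ≤ |(y : ℝ)| := by exact_mod_cast Int.one_le_abs hy
  rw [phi_add_add]
  push_cast
  rw [abs_mul, abs_neg, abs_mul, abs_mul, abs_two, abs_of_nonneg hQ]
  gcongr
  calc jap x ≤ 2 * |(x : ℝ)| := jap_le_two_mul_abs hx
    _ ≤ 2 * |(x : ℝ)| * |(y : ℝ)| := le_mul_of_one_le_right (by positivity) hy1

lemma ENNReal.mul_le_sq_add_sq (a b : ℝ≥0∞) : a * b ≤ a ^ 2 + b ^ 2 := by
  rcases le_total a b with h | h
  · calc a * b ≤ b ^ 2 := by rw [sq]; gcongr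
      _ ≤ a ^ 2 + b ^ 2 := le_add_self
  · calc a * b ≤ a ^ 2 := by rw [sq]; gcongr
      _ ≤ a ^ 2 + b ^ 2 := le_self_add

lemma tsum_Gamma_le (F : ℤ × ℤ × ℤ → ℝ≥0∞) (n : ℤ) :
    ∑' p : Gamma n, F p ≤ ∑' (x : ℤ) (y : ℤ), F (n + x, n + x + y, n + y) := by
  have hF : ∀ p : Gamma n,
      F p = F (n + (p.1.1 - n), n + (p.1.1 - n) + (p.1.2.2 - n), n + (p.1.2.2 - n)) := by
    intro p
    obtain ⟨x, y, -, -, hp⟩ := mem_Gamma_iff.1 p.2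
    rw [hp]
    simp only [add_sub_cancel_left]
  have hinj : Function.Injective fun p : Gamma n => (p.1.1 - n, p.1.2.2 - n) := by
    intro p q h
    obtain ⟨x, y, -, -, hp⟩ := mem_Gamma_iff.1 p.2
    obtain ⟨x', y', -, -, hq⟩ := mem_Gamma_iff.1 q.2
    apply Subtype.ext
    simp only [hp, hq, Prod.mk.injEq, add_sub_cancel_left] at h ⊢
    omega
  rw [tsum_congr hF, ← ENNReal.tsum_prod]
  exact ENNReal.tsum_comp_le_tsum_of_injective hinj
    (fun q : ℤ × ℤ => F (n + q.1, n + q.1 + q.2, n + q.2))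

lemma tsum_kernel_mul_shifted_pairs (k W : ℤ → ℝ≥0∞) :
    ∑' (n : ℤ) (x : ℤ) (y : ℤ), k x * (W (n + x) * W (n + x + y) + W (n + y) * W n)
      = 2 * (∑' m, k m) * (∑' m, W m) ^ 2 := by
  have shiftL : ∀ a, ∑' y, W (a + y) = ∑' m, W m := fun a => (Equiv.addLeft a).tsum_eq W
  have shiftR : ∀ x, ∑' n, W (n + x) = ∑' m, W m := fun x => (Equiv.addRight x).tsum_eq W
  have inner : ∀ n x, ∑' y, k x * (W (n + x) * W (n + x + y) + W (n + y) * W n)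
      = (k x * W (n + x) + k x * W n) * ∑' m, W m := by
    intro n x
    rw [ENNReal.tsum_mul_left, ENNReal.tsum_add, ENNReal.tsum_mul_left, ENNReal.tsum_mul_right,
      shiftL, shiftL]
    ring
  simp_rw [inner, ENNReal.tsum_mul_right, ENNReal.tsum_add]
  rw [ENNReal.tsum_comm (f := fun n x => k x * W (n + x))]
  simp_rw [ENNReal.tsum_mul_left, shiftR, ENNReal.tsum_mul_right]
  rw [ENNReal.tsum_mul_left]
  ring

section ResonantSum

variable {s τ δ : ℝ} {u W : ℤ → ℝ≥0∞}

lemma resonant_kernel_le (hs : 0 ≤ s) (hτ : 0 ≤ τ) (hδ : 0 ≤ δ)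
    (hsum : 2 * s + 3 * τ + δ = 2) {n x y a b c : ℤ} (hx : x ≠ 0) (hy : y ≠ 0)
    (ha : 1 + a ^ 2 ≤ 3 * phiQuadratic n x y) (hb : 1 + b ^ 2 ≤ 3 * phiQuadratic n x y)
    (hc : 1 + c ^ 2 ≤ 3 * phiQuadratic n x y) :
    jap n ^ (2 * s) / |(phi (n + x, n + x + y, n + y) n : ℝ)| * (jap a ^ τ * jap b ^ τ * jap c ^ τ)
      ≤ 3 * jap x ^ (-(1 + δ)) := by
  set R : ℝ := 3 * phiQuadratic n x y
  have hcast : ∀ m : ℤ, 1 + m ^ 2 ≤ 3 * phiQuadratic n x y → 1 + (m : ℝ) ^ 2 ≤ R :=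
    fun m hm => by simp only [R]; exact_mod_cast hm
  have hn := hcast n (one_add_sq_le_three_mul_phiQuadratic hx hy (by simp))
  have hx' := hcast x (one_add_sq_le_three_mul_phiQuadratic hx hy (by simp))
  have hR : 0 < R := lt_of_lt_of_le (by positivity) hn
  have hprod : jap n ^ (2 * s) * (jap a ^ τ * jap b ^ τ * jap c ^ τ) * jap x ^ δ ≤ R := by
    have := prod_jap_rpow_le Finset.univ ![n, a, b, c, x] ![2 * s, τ, τ, τ, δ] hR
      (by simp [Fin.forall_fin_succ, hs, hτ, hδ])
      (by simp [Fin.forall_fin_succ, hn, hcast a ha, hcast b hb, hcast c hc, hx'])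
    simp only [Fin.prod_univ_five, Fin.sum_univ_five, Matrix.cons_val] at this
    rw [show (2 * s + τ + τ + τ + δ) / 2 = 1 by linarith, Real.rpow_one] at this
    exact (le_of_eq (by ring)).trans this
  have hφ : jap x * R ≤ 3 * |(phi (n + x, n + x + y, n + y) n : ℝ)| := by
    linarith [jap_mul_le_abs_phi (n := n) hx hy]
  have hφ0 : 0 < |(phi (n + x, n + x + y, n + y) n : ℝ)| := by nlinarith [jap_pos x]
  have hjx : 0 < jap x := jap_pos x
  rw [Real.rpow_neg hjx.le, Real.rpow_add hjx, Real.rpow_one, ← div_eq_mul_inv, div_mul_eq_mul_div,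
    div_le_div_iff₀ hφ0 (by positivity)]
  calc jap n ^ (2 * s) * (jap a ^ τ * jap b ^ τ * jap c ^ τ) * (jap x * jap x ^ δ)
      = jap n ^ (2 * s) * (jap a ^ τ * jap b ^ τ * jap c ^ τ) * jap x ^ δ * jap x := by ring
    _ ≤ R * jap x := by gcongr
    _ ≤ 3 * |(phi (n + x, n + x + y, n + y) n : ℝ)| := by linarith

lemma resonant_piece_le (hs : 0 ≤ s) (hτ : 0 ≤ τ) (hδ : 0 ≤ δ) (hsum : 2 * s + 3 * τ + δ = 2)
    (hu : ∀ m, u m ^ 2 = ENNReal.ofReal (jap m ^ τ) * W m) {n x y a b c : ℤ}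
    (hx : x ≠ 0) (hy : y ≠ 0) (ha : 1 + a ^ 2 ≤ 3 * phiQuadratic n x y)
    (hb : 1 + b ^ 2 ≤ 3 * phiQuadratic n x y) (hc : 1 + c ^ 2 ≤ 3 * phiQuadratic n x y) :
    ENNReal.ofReal (jap n ^ (2 * s) / |(phi (n + x, n + x + y, n + y) n : ℝ)|)
        * u a ^ 2 * (u b ^ 2 * u c ^ 2)
      ≤ 3 * (∑' m, W m) * (ENNReal.ofReal (jap x ^ (-(1 + δ))) * (W b * W c)) := by
  rw [hu, hu, hu]
  calc _ = ENNReal.ofReal (jap n ^ (2 * s) / |(phi (n + x, n + x + y, n + y) n : ℝ)|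
            * (jap a ^ τ * jap b ^ τ * jap c ^ τ)) * W a * (W b * W c) := by
        rw [ENNReal.ofReal_mul (div_nonneg (jap_rpow_pos _ _).le (abs_nonneg _)),
          ENNReal.ofReal_mul, ENNReal.ofReal_mul (jap_rpow_pos _ _).le]
        · ring
        · exact mul_nonneg (jap_rpow_pos _ _).le (jap_rpow_pos _ _).le
    _ ≤ ENNReal.ofReal (3 * jap x ^ (-(1 + δ))) * (∑' m, W m) * (W b * W c) := by
        refine mul_le_mul_left (mul_le_mul' (ENNReal.ofReal_le_ofReal ?_) (ENNReal.le_tsum a)) _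
        exact resonant_kernel_le hs hτ hδ hsum hx hy ha hb hc
    _ = _ := by
        rw [ENNReal.ofReal_mul (by norm_num), ENNReal.ofReal_ofNat]
        ring

lemma resonant_summand_le (hs : 0 ≤ s) (hτ : 0 ≤ τ) (hδ : 0 ≤ δ) (hsum : 2 * s + 3 * τ + δ = 2)
    (hu : ∀ m, u m ^ 2 = ENNReal.ofReal (jap m ^ τ) * W m) (b : Fin 4) {n : ℤ}
    {p : ℤ × ℤ × ℤ} (hp : p ∈ Gamma n) :
    ENNReal.ofReal (jap n ^ (2 * s) / |(phi p n : ℝ)|) * u (![p.1, p.2.1, p.2.2, n] b) ^ 2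
        * u p.1 * u p.2.1 * u p.2.2 * u n
      ≤ 3 * (∑' m, W m) * (ENNReal.ofReal (jap (p.1 - n) ^ (-(1 + δ)))
          * (W p.1 * W p.2.1 + W p.2.2 * W n)) := by
  obtain ⟨x, y, hx, hy, rfl⟩ := mem_Gamma_iff.1 hp
  have hfreq : ∀ m ∈ ({n, n + x, n + y, n + x + y, x} : Finset ℤ),
      1 + m ^ 2 ≤ 3 * phiQuadratic n x y :=
    fun m hm => one_add_sq_le_three_mul_phiQuadratic hx hy hm
  set f := ![n + x, n + x + y, n + y, n] b
  have hf : 1 + f ^ 2 ≤ 3 * phiQuadratic n x y := hfreq f (by fin_cases b <;> simp [f])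
  set K := ENNReal.ofReal (jap n ^ (2 * s) / |(phi (n + x, n + x + y, n + y) n : ℝ)|)
  dsimp only
  rw [add_sub_cancel_left]
  calc K * u f ^ 2 * u (n + x) * u (n + x + y) * u (n + y) * u n
      = K * u f ^ 2 * ((u (n + x) * u (n + x + y)) * (u (n + y) * u n)) := by ring
    _ ≤ K * u f ^ 2 * ((u (n + x) * u (n + x + y)) ^ 2 + (u (n + y) * u n) ^ 2) := by
        gcongr; exact ENNReal.mul_le_sq_add_sq _ _
    _ = K * u f ^ 2 * (u (n + x) ^ 2 * u (n + x + y) ^ 2)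
          + K * u f ^ 2 * (u (n + y) ^ 2 * u n ^ 2) := by ring
    _ ≤ 3 * (∑' m, W m) * (ENNReal.ofReal (jap x ^ (-(1 + δ))) * (W (n + x) * W (n + x + y)))
          + 3 * (∑' m, W m) * (ENNReal.ofReal (jap x ^ (-(1 + δ))) * (W (n + y) * W n)) :=
        add_le_add
          (resonant_piece_le hs hτ hδ hsum hu hx hy hf (hfreq _ (by simp)) (hfreq _ (by simp)))
          (resonant_piece_le hs hτ hδ hsum hu hx hy hf (hfreq _ (by simp)) (hfreq _ (by simp)))
    _ = _ := by ring

theorem tsum_resonant_le (hs : 0 ≤ s) (hτ : 0 ≤ τ) (hδ : 0 ≤ δ) (hsum : 2 * s + 3 * τ + δ = 2)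
    (hu : ∀ m, u m ^ 2 = ENNReal.ofReal (jap m ^ τ) * W m) (b : Fin 4) :
    ∑' (n : ℤ) (p : Gamma n), ENNReal.ofReal (jap n ^ (2 * s) / |(phi p.1 n : ℝ)|)
        * u (![p.1.1, p.1.2.1, p.1.2.2, n] b) ^ 2 * u p.1.1 * u p.1.2.1 * u p.1.2.2 * u n
      ≤ 6 * (∑' m, ENNReal.ofReal (jap m ^ (-(1 + δ)))) * (∑' m, W m) ^ 3 := by
  set A := ∑' m, W m
  calc _ ≤ ∑' (n : ℤ) (p : Gamma n), 3 * A * (ENNReal.ofReal (jap (p.1.1 - n) ^ (-(1 + δ)))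
          * (W p.1.1 * W p.1.2.1 + W p.1.2.2 * W n)) :=
        ENNReal.tsum_le_tsum fun n => ENNReal.tsum_le_tsum fun p =>
          resonant_summand_le hs hτ hδ hsum hu b p.2
    _ = 3 * A * ∑' (n : ℤ) (p : Gamma n), ENNReal.ofReal (jap (p.1.1 - n) ^ (-(1 + δ)))
          * (W p.1.1 * W p.1.2.1 + W p.1.2.2 * W n) := by
        simp_rw [ENNReal.tsum_mul_left]
    _ ≤ 3 * A * ∑' (n : ℤ) (x : ℤ) (y : ℤ), ENNReal.ofReal (jap x ^ (-(1 + δ)))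
          * (W (n + x) * W (n + x + y) + W (n + y) * W n) := by
        gcongr with n
        refine (tsum_Gamma_le (fun p => ENNReal.ofReal (jap (p.1 - n) ^ (-(1 + δ)))
          * (W p.1 * W p.2.1 + W p.2.2 * W n)) n).trans_eq ?_
        simp only [add_sub_cancel_left]
    _ = _ := by
        rw [tsum_kernel_mul_shifted_pairs]
        ring

end ResonantSum

theorem resonant_term_sextilinear_bound_general (s ε σ : ℝ)
    (hs : s ≤ 1 / 2) (hε0 : 0 < ε) (hε : ε < (4 * s - 1) / 6)
    (hσ : σ = s - 1 / 2 - ε) :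
    ∃ C : ℝ, 0 < C ∧ ∀ (v : ℤ → ℂ) (b : Fin 4),
      ∑' (n : ℤ) (p : Gamma n),
          ENNReal.ofReal (jap n ^ (2 * s) / |(phi p.1 n : ℝ)|)
            * (‖v (![p.1.1, p.1.2.1, p.1.2.2, n] b)‖₊ : ℝ≥0∞) ^ 2
            * (‖v p.1.1‖₊ : ℝ≥0∞) * (‖v p.1.2.1‖₊ : ℝ≥0∞)
            * (‖v p.1.2.2‖₊ : ℝ≥0∞) * (‖v n‖₊ : ℝ≥0∞)
        ≤ ENNReal.ofReal C *
            (∑' m : ℤ, ENNReal.ofReal (jap m ^ (2 * σ)) * (‖v m‖₊ : ℝ≥0∞) ^ 2) ^ 3 := by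
  have hτ : 0 ≤ -(2 * σ) := by rw [hσ]; linarith
  have hδ : 0 < 4 * s - 1 - 6 * ε := by linarith
  have hexp : 2 * s + 3 * -(2 * σ) + (4 * s - 1 - 6 * ε) = 2 := by rw [hσ]; ring
  have hsum := summable_jap_rpow_neg (ρ := 1 + (4 * s - 1 - 6 * ε)) (by linarith)
  refine ⟨6 * ∑' m : ℤ, jap m ^ (-(1 + (4 * s - 1 - 6 * ε))),
    mul_pos (by norm_num) (hsum.tsum_pos (fun m => (jap_rpow_pos m _).le) 0 (jap_rpow_pos 0 _)),
    fun v b => ?_⟩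
  have hu : ∀ m, (‖v m‖₊ : ℝ≥0∞) ^ 2
      = ENNReal.ofReal (jap m ^ (-(2 * σ))) * (ENNReal.ofReal (jap m ^ (2 * σ)) * ‖v m‖₊ ^ 2) := by
    intro m
    rw [← mul_assoc, ← ENNReal.ofReal_mul (jap_rpow_pos m _).le, ← Real.rpow_add (jap_pos m),
      neg_add_cancel, Real.rpow_zero, ENNReal.ofReal_one, one_mul]
  refine (tsum_resonant_le (by linarith) hτ hδ.le hexp hu b).trans_eq ?_
  rw [ENNReal.ofReal_mul (by norm_num), ENNReal.ofReal_ofNat,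
    ENNReal.ofReal_tsum_of_nonneg (fun m => (jap_rpow_pos m _).le) hsum]

/-- The resonant term bound `|R⁽²⁾(v)| ≲ ‖v‖⁶_{H^σ}`: for `1/4 < s ≤ 1/2`,
`0 < ε < (4s−1)/6` and `σ = s − 1/2 − ε`, there is `C > 0` such that for every `v`
and each of the four distinguished positions `b` (selecting one of `n₁,n₂,n₃,n`),
with all sums in `[0,∞]`,
`Σ_n Σ_{Γ(n)} (⟨n⟩^{2s}/|φ|)·|v(n_b)|²·|v(n₁)||v(n₂)||v(n₃)||v(n)| ≤ C‖v‖⁶_{H^σ}`. -/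
theorem resonant_term_sextilinear_bound (s ε σ : ℝ)
    (hs0 : 1 / 4 < s) (hs : s ≤ 1 / 2) (hε0 : 0 < ε) (hε : ε < (4 * s - 1) / 6)
    (hσ : σ = s - 1 / 2 - ε) :
    ∃ C : ℝ, 0 < C ∧ ∀ (v : ℤ → ℂ) (b : Fin 4),
      ∑' (n : ℤ) (p : Gamma n),
          ENNReal.ofReal (jap n ^ (2 * s) / |(phi p.1 n : ℝ)|)
            * (‖v (![p.1.1, p.1.2.1, p.1.2.2, n] b)‖₊ : ℝ≥0∞) ^ 2
            * (‖v p.1.1‖₊ : ℝ≥0∞) * (‖v p.1.2.1‖₊ : ℝ≥0∞)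
            * (‖v p.1.2.2‖₊ : ℝ≥0∞) * (‖v n‖₊ : ℝ≥0∞)
        ≤ ENNReal.ofReal C *
            (∑' m : ℤ, ENNReal.ofReal (jap m ^ (2 * σ)) * (‖v m‖₊ : ℝ≥0∞) ^ 2) ^ 3 :=
  resonant_term_sextilinear_bound_general s ε σ hs hε0 hε hσ
end

section
/- Let 3/10 < s ≤ 1/2, let 0 < ε < (s − 3/10)/3, set σ = s − 1/2 − ε, and let K ≥ 1. Then there exists a constant C > 0 with the following property: for every n ∈ ℤ and for each of the four second-generation configurations (in which the frequency n* at which the second triple is attached is one of n₁, n₂, n₃, or n), one has Σ (n_max^{(1)})^{4s−6σ} (n_max^{(2)})^{−6σ} / φ₁² ≤ C, where the sum runs over all (n₁,n₂,n₃) ∈ Γ(n) and (m₁,m₂,m₃) ∈ Γ(n*) satisfying |φ₂| ≤ K|φ₁|, with φ₁ = φ(n₁,n₂,n₃,n), φ₂ = φ(m₁,m₂,m₃,n*), n_max^{(1)} = max(|n₁|,|n₂|,|n₃|,|n|), and n_max^{(2)} = max(|m₁|,|m₂|,|m₃|,|n*|). -/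
open scoped ENNReal

/-- The positive quadratic factor of `φ`. -/
def Qz (a c n : ℤ) : ℤ := 6*n^2 + 6*n*(a+c) + 2*a^2 + 3*a*c + 2*c^2

lemma phi_factor {p : ℤ × ℤ × ℤ} {n : ℤ} (h : n = p.1 - p.2.1 + p.2.2) :
    phi p n = -2 * (p.1 - n) * (p.2.2 - n) * Qz (p.1 - n) (p.2.2 - n) n := by
  obtain ⟨n₁, n₂, n₃⟩ := p
  simp only at h ⊢
  have h2 : n₂ = n₁ + n₃ - n := by omega
  subst h2
  simp only [phi, Qz]
  ring

lemma Qz_ge {a c n : ℤ} : a^2 + c^2 ≤ 2 * Qz a c n := by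
  simp only [Qz]; nlinarith [sq_nonneg (2*n + a + c)]

lemma Qz_pos {a c n : ℤ} (ha : a ≠ 0) (hc : c ≠ 0) : 1 ≤ Qz a c n := by
  have ha0 : a^2 ≠ 0 := pow_ne_zero _ ha
  have hc0 : c^2 ≠ 0 := pow_ne_zero _ hc
  have ha1 := sq_nonneg a
  have hc1 := sq_nonneg c
  have := Qz_ge (a := a) (c := c) (n := n)
  omega

lemma Qz_ge_mul {a c n : ℤ} : |a| * |c| ≤ Qz a c n := by
  have h1 : a^2 + c^2 ≤ 2 * Qz a c n := Qz_ge
  have h2 : 2 * (|a| * |c|) ≤ a^2 + c^2 := by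
    nlinarith [sq_nonneg (|a| - |c|), sq_abs a, sq_abs c]
  omega

lemma sq_bounds {a c n : ℤ} :
    n^2 ≤ 13 * Qz a c n ∧ (n+a)^2 ≤ 13 * Qz a c n ∧ (n+c)^2 ≤ 13 * Qz a c n ∧
    (n+a+c)^2 ≤ 13 * Qz a c n := by
  refine ⟨?_, ?_, ?_, ?_⟩ <;> simp only [Qz] <;>
    nlinarith [sq_nonneg (77*n + 39*a + 39*c), sq_nonneg (77*n + 38*a + 39*c),
      sq_nonneg (77*n + 39*a + 38*c), sq_nonneg (77*n + 38*a + 38*c),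
      sq_nonneg (a+c), sq_nonneg (a-c), sq_nonneg a, sq_nonneg c]

lemma nmax_sq_le {p : ℤ × ℤ × ℤ} {n B : ℤ} (h1 : p.1^2 ≤ B) (h2 : p.2.1^2 ≤ B)
    (h3 : p.2.2^2 ≤ B) (h4 : n^2 ≤ B) : (nmax p n)^2 ≤ B := by
  unfold nmax
  rcases max_choice (max |p.1| |p.2.1|) (max |p.2.2| |n|) with h | h <;> rw [h]
  · rcases max_choice |p.1| |p.2.1| with h' | h' <;> rw [h', sq_abs] <;> assumption
  · rcases max_choice |p.2.2| |n| with h' | h' <;> rw [h', sq_abs] <;> assumption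

lemma pointwise_bound {α β r p K u v Q Q' N₁ N₂ : ℝ}
    (hu : 1 ≤ u) (hv : 1 ≤ v) (hQ : 1 ≤ Q) (hQ' : 1 ≤ Q')
    (hN₁ : 0 ≤ N₁) (hN₂ : 0 ≤ N₂) (hK : 1 ≤ K)
    (h13 : N₁^2 ≤ 13*Q) (h13' : N₂^2 ≤ 13*Q')
    (huQ : u ≤ Q) (hvQ' : v ≤ Q')
    (hcon : 2*(v*Q') ≤ K * (2*(u*Q)))
    (hα : 0 ≤ α) (hβ : 0 ≤ β) (hrβ : 0 ≤ r - β/2)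
    (hθ : (α+β)/2 + (r-β/2)/2 ≤ 2)
    (hp : p = 4 - (β/2 + (r-β/2)/2) - ((α+β)/2 + (r-β/2)/2)) :
    N₁^α * N₂^β / (4*u^2*Q^2) ≤
      (13^((α+β)/2) * K^(β/2 + (r-β/2)/2) / 4) * (u^(-p) * v^(-r)) := by
  have hu0 : (0:ℝ) < u := lt_of_lt_of_le one_pos hu
  have hv0 : (0:ℝ) < v := lt_of_lt_of_le one_pos hv
  have hQ0 : (0:ℝ) < Q := lt_of_lt_of_le one_pos hQ
  have hQ'0 : (0:ℝ) < Q' := lt_of_lt_of_le one_pos hQ'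
  have hK0 : (0:ℝ) < K := lt_of_lt_of_le one_pos hK
  set w : ℝ := (r - β/2)/2 with hw
  have hw0 : 0 ≤ w := by positivity
  -- step A
  have hA : N₁ ^ α ≤ (13*Q) ^ (α/2) := by
    have e : N₁ ^ α = (N₁^2) ^ (α/2) := by
      rw [← Real.rpow_natCast N₁ 2, ← Real.rpow_mul hN₁]; congr 1; push_cast; ring
    rw [e]
    exact Real.rpow_le_rpow (sq_nonneg _) h13 (by positivity)
  -- step B
  have hB : N₂ ^ β * v ^ (β/2) ≤ (13*(K*(u*Q))) ^ (β/2) := by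
    have e : N₂ ^ β * v ^ (β/2) = (N₂^2 * v) ^ (β/2) := by
      rw [Real.mul_rpow (sq_nonneg _) hv0.le, ← Real.rpow_natCast N₂ 2,
        ← Real.rpow_mul hN₂]
      congr 1
      push_cast; ring
    rw [e]
    refine Real.rpow_le_rpow (by positivity) ?_ (by positivity)
    nlinarith
  -- step C
  have hC : v ^ (r - β/2) ≤ (K*(u*Q)) ^ w := by
    have e : v ^ (r - β/2) = (v^2) ^ w := by
      rw [← Real.rpow_natCast v 2, ← Real.rpow_mul hv0.le, hw]; congr 1; push_cast; ring
    rw [e]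
    refine Real.rpow_le_rpow (sq_nonneg _) ?_ hw0
    nlinarith
  -- combine
  have key : N₁ ^ α * N₂ ^ β * v ^ r ≤
      13 ^ ((α+β)/2) * K ^ (β/2 + w) * (u ^ (2 - p) * Q ^ (2:ℝ)) := by
    have hvr : v ^ r = v ^ (β/2) * v ^ (r - β/2) := by
      rw [← Real.rpow_add hv0]; congr 1; ring
    calc N₁ ^ α * N₂ ^ β * v ^ r
        = N₁ ^ α * (N₂ ^ β * v ^ (β/2)) * v ^ (r - β/2) := by rw [hvr]; ring
      _ ≤ (13*Q)^(α/2) * (13*(K*(u*Q)))^(β/2) * (K*(u*Q))^w := by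
          refine mul_le_mul (mul_le_mul hA hB (by positivity) (by positivity)) hC
            (by positivity) (by positivity)
      _ = 13 ^ ((α+β)/2) * K ^ (β/2 + w) * (u ^ (β/2 + w) * Q ^ (α/2 + β/2 + w)) := by
          have h4 : (α+β)/2 = α/2 + β/2 := by ring
          rw [Real.mul_rpow (by norm_num) hQ0.le,
            Real.mul_rpow (by norm_num) (by positivity),
            Real.mul_rpow hK0.le (by positivity),
            Real.mul_rpow hK0.le (by positivity),
            Real.mul_rpow hu0.le hQ0.le, Real.mul_rpow hu0.le hQ0.le, h4]
          simp only [Real.rpow_add hu0, Real.rpow_add hQ0, Real.rpow_add hK0,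
            Real.rpow_add (show (0:ℝ) < 13 by norm_num)]
          ring
      _ ≤ 13 ^ ((α+β)/2) * K ^ (β/2 + w) * (u ^ (2 - p) * Q ^ (2:ℝ)) := by
          have h1 : Q ^ (α/2 + β/2 + w) = Q ^ (α/2 + β/2 + w - 2) * Q ^ (2:ℝ) := by
            rw [← Real.rpow_add hQ0]; congr 1; ring
          have h2 : Q ^ (α/2 + β/2 + w - 2) ≤ u ^ (α/2 + β/2 + w - 2) :=
            Real.rpow_le_rpow_of_nonpos hu0 huQ (by linarith)
          have h3 : u ^ (β/2 + w) * (u ^ (α/2 + β/2 + w - 2) * Q ^ (2:ℝ))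
              = u ^ (2 - p) * Q ^ (2:ℝ) := by
            rw [← mul_assoc, ← Real.rpow_add hu0]
            have : β/2 + w + (α/2 + β/2 + w - 2) = 2 - p := by rw [hp]; ring
            rw [this]
          calc 13 ^ ((α+β)/2) * K ^ (β/2 + w) * (u ^ (β/2 + w) * Q ^ (α/2 + β/2 + w))
              ≤ 13 ^ ((α+β)/2) * K ^ (β/2 + w)
                  * (u ^ (β/2 + w) * (u ^ (α/2 + β/2 + w - 2) * Q ^ (2:ℝ))) := by
                rw [h1]
                refine mul_le_mul_of_nonneg_left ?_ (by positivity)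
                refine mul_le_mul_of_nonneg_left ?_ (by positivity)
                exact mul_le_mul_of_nonneg_right h2 (by positivity)
            _ = _ := by rw [h3]
  -- finish
  rw [div_le_iff₀ (by positivity)]
  have hv1 : v ^ r * v ^ (-r) = 1 := by
    rw [← Real.rpow_add hv0]; simp
  have hu1 : u ^ (2 - p) = u ^ (-p) * u ^ (2:ℝ) := by
    rw [← Real.rpow_add hu0]; congr 1; ring
  have hu2 : u ^ (2:ℝ) = u ^ (2:ℕ) := by
    rw [← Real.rpow_natCast u 2]; norm_num
  have hQ2 : Q ^ (2:ℝ) = Q ^ (2:ℕ) := by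
    rw [← Real.rpow_natCast Q 2]; norm_num
  calc N₁ ^ α * N₂ ^ β = (N₁ ^ α * N₂ ^ β * v ^ r) * v ^ (-r) := by
        rw [mul_assoc, hv1, mul_one]
    _ ≤ (13 ^ ((α+β)/2) * K ^ (β/2 + w) * (u ^ (2 - p) * Q ^ (2:ℝ))) * v ^ (-r) :=
        mul_le_mul_of_nonneg_right key (by positivity)
    _ = 13 ^ ((α+β)/2) * K ^ (β/2 + w) / 4 * (u ^ (-p) * v ^ (-r)) * (4*u^2*Q^2) := by
        rw [hu1, hu2, hQ2]; ring

lemma tsum_g_ne_top {p r : ℝ} (hp : 1 < p) (hr : 1 < r) :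
    (∑' x : ℤ × ℤ × ℤ × ℤ, ENNReal.ofReal (|(x.1 : ℝ)| ^ (-p)) *
      (ENNReal.ofReal (|(x.2.1 : ℝ)| ^ (-p)) *
        (ENNReal.ofReal (|(x.2.2.1 : ℝ)| ^ (-r)) * ENNReal.ofReal (|(x.2.2.2 : ℝ)| ^ (-r)))))
      ≠ ⊤ := by
  have hfin : ∀ b : ℝ, 1 < b → (∑' a : ℤ, ENNReal.ofReal (|(a:ℝ)| ^ (-b))) ≠ ⊤ := by
    intro b hb
    rw [← ENNReal.ofReal_tsum_of_nonneg (fun a => by positivity)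
      (Real.summable_abs_int_rpow hb)]
    exact ENNReal.ofReal_ne_top
  rw [ENNReal.tsum_prod']
  simp only [ENNReal.tsum_mul_left]
  rw [ENNReal.tsum_mul_right, ENNReal.tsum_prod']
  simp only [ENNReal.tsum_mul_left]
  rw [ENNReal.tsum_mul_right, ENNReal.tsum_prod']
  simp only [ENNReal.tsum_mul_left]
  rw [ENNReal.tsum_mul_right]
  exact ENNReal.mul_ne_top (hfin p hp) (ENNReal.mul_ne_top (hfin p hp)
    (ENNReal.mul_ne_top (hfin r hr) (hfin r hr)))

noncomputable def gfun (p r : ℝ) : ℤ × ℤ × ℤ × ℤ → ℝ≥0∞ := fun x =>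
  ENNReal.ofReal (|(x.1 : ℝ)| ^ (-p)) *
    (ENNReal.ofReal (|(x.2.1 : ℝ)| ^ (-p)) *
      (ENNReal.ofReal (|(x.2.2.1 : ℝ)| ^ (-r)) * ENNReal.ofReal (|(x.2.2.2 : ℝ)| ^ (-r))))

lemma tsum_gfun_ne_top {p r : ℝ} (hp : 1 < p) (hr : 1 < r) :
    (∑' x : ℤ × ℤ × ℤ × ℤ, gfun p r x) ≠ ⊤ := by
  simpa [gfun] using tsum_g_ne_top hp hr

lemma nmax_nonneg (p : ℤ × ℤ × ℤ) (n : ℤ) : 0 ≤ nmax p n :=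
  le_trans (abs_nonneg p.1) (le_trans (le_max_left _ _) (le_max_left _ _))

lemma abs_phi_factor {x1 x2 x3 n : ℤ} (hGe : n = x1 - x2 + x3) :
    |((phi (x1, x2, x3) n : ℤ) : ℝ)|
      = 2 * ((|((x1 - n : ℤ) : ℝ)| * |((x3 - n : ℤ) : ℝ)|)
          * ((Qz (x1 - n) (x3 - n) n : ℤ) : ℝ)) := by
  have hQnn : (0:ℤ) ≤ Qz (x1 - n) (x3 - n) n := by
    have := Qz_ge (a := x1 - n) (c := x3 - n) (n := n)
    nlinarith [sq_nonneg (x1 - n), sq_nonneg (x3 - n)]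
  have habs : |phi (x1, x2, x3) n|
      = 2 * (|x1 - n| * |x3 - n| * Qz (x1 - n) (x3 - n) n) := by
    rw [phi_factor hGe]
    have h2 : -2 * (x1 - n) * (x3 - n) * Qz (x1 - n) (x3 - n) n
        = -(2 * (x1 - n) * (x3 - n) * Qz (x1 - n) (x3 - n) n) := by ring
    rw [h2, abs_neg, abs_mul, abs_mul, abs_mul, abs_of_nonneg hQnn,
      abs_of_nonneg (by norm_num : (0:ℤ) ≤ 2)]
    ring
  rw [← Int.cast_abs, habs]
  push_cast
  ring

lemma per_term {α β r p K c₀ : ℝ}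
    (hK : 1 ≤ K)
    (hα0 : 0 ≤ α) (hβ0 : 0 ≤ β) (hrβ0 : 0 ≤ r - β/2)
    (hθ : (α+β)/2 + (r-β/2)/2 ≤ 2)
    (hp : p = 4 - (β/2 + (r-β/2)/2) - ((α+β)/2 + (r-β/2)/2))
    (hc₀ : c₀ = 13 ^ ((α+β)/2) * K ^ (β/2 + (r-β/2)/2) / 4)
    {n m x1 x2 x3 y1 y2 y3 : ℤ}
    (hGe : n = x1 - x2 + x3) (hGx1 : x1 ≠ n) (hGx3 : x3 ≠ n)
    (hHe : m = y1 - y2 + y3) (hHy1 : y1 ≠ m) (hHy3 : y3 ≠ m)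
    (hCon : |((phi (y1, y2, y3) m : ℤ) : ℝ)| ≤ K * |((phi (x1, x2, x3) n : ℤ) : ℝ)|) :
    ENNReal.ofReal
        (((nmax (x1, x2, x3) n : ℤ) : ℝ) ^ α * ((nmax (y1, y2, y3) m : ℤ) : ℝ) ^ β
          / ((phi (x1, x2, x3) n : ℤ) : ℝ) ^ 2)
      ≤ ENNReal.ofReal c₀ * gfun p r (x1 - n, x3 - n, y1 - m, y3 - m) := by
  have hK0 : (0:ℝ) < K := lt_of_lt_of_le one_pos hK
  have hc₀0 : 0 < c₀ := by rw [hc₀]; positivity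
  set a : ℤ := x1 - n with hadef
  set c : ℤ := x3 - n with hcdef
  set a' : ℤ := y1 - m with ha'def
  set c' : ℤ := y3 - m with hc'def
  have ha : a ≠ 0 := sub_ne_zero.mpr hGx1
  have hc : c ≠ 0 := sub_ne_zero.mpr hGx3
  have ha' : a' ≠ 0 := sub_ne_zero.mpr hHy1
  have hc' : c' ≠ 0 := sub_ne_zero.mpr hHy3
  have ha1 : (1:ℝ) ≤ |(a : ℝ)| := by exact_mod_cast Int.one_le_abs ha
  have hc1 : (1:ℝ) ≤ |(c : ℝ)| := by exact_mod_cast Int.one_le_abs hc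
  have ha'1 : (1:ℝ) ≤ |(a' : ℝ)| := by exact_mod_cast Int.one_le_abs ha'
  have hc'1 : (1:ℝ) ≤ |(c' : ℝ)| := by exact_mod_cast Int.one_le_abs hc'
  have hu1 : (1:ℝ) ≤ |(a : ℝ)| * |(c : ℝ)| := by nlinarith
  have hv1 : (1:ℝ) ≤ |(a' : ℝ)| * |(c' : ℝ)| := by nlinarith
  have hQ1 : (1:ℝ) ≤ ((Qz a c n : ℤ) : ℝ) := by exact_mod_cast Qz_pos ha hc
  have hQ'1 : (1:ℝ) ≤ ((Qz a' c' m : ℤ) : ℝ) := by exact_mod_cast Qz_pos ha' hc'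
  have huQ : |(a : ℝ)| * |(c : ℝ)| ≤ ((Qz a c n : ℤ) : ℝ) := by
    have := Qz_ge_mul (a := a) (c := c) (n := n)
    have h2 : ((|a| * |c| : ℤ) : ℝ) ≤ ((Qz a c n : ℤ) : ℝ) := by exact_mod_cast this
    push_cast at h2
    exact h2
  have hvQ' : |(a' : ℝ)| * |(c' : ℝ)| ≤ ((Qz a' c' m : ℤ) : ℝ) := by
    have := Qz_ge_mul (a := a') (c := c') (n := m)
    have h2 : ((|a'| * |c'| : ℤ) : ℝ) ≤ ((Qz a' c' m : ℤ) : ℝ) := by exact_mod_cast this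
    push_cast at h2
    exact h2
  have h13 : ((nmax (x1, x2, x3) n : ℤ) : ℝ)^2 ≤ 13 * ((Qz a c n : ℤ) : ℝ) := by
    have hb := sq_bounds (a := a) (c := c) (n := n)
    have h1 : x1^2 ≤ 13 * Qz a c n := by
      have := hb.2.1; rwa [show n + a = x1 by omega] at this
    have h2 : x2^2 ≤ 13 * Qz a c n := by
      have := hb.2.2.2; rwa [show n + a + c = x2 by omega] at this
    have h3 : x3^2 ≤ 13 * Qz a c n := by
      have := hb.2.2.1; rwa [show n + c = x3 by omega] at this
    have := nmax_sq_le (p := (x1, x2, x3)) (n := n) h1 h2 h3 hb.1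
    exact_mod_cast this
  have h13' : ((nmax (y1, y2, y3) m : ℤ) : ℝ)^2 ≤ 13 * ((Qz a' c' m : ℤ) : ℝ) := by
    have hb := sq_bounds (a := a') (c := c') (n := m)
    have h1 : y1^2 ≤ 13 * Qz a' c' m := by
      have := hb.2.1; rwa [show m + a' = y1 by omega] at this
    have h2 : y2^2 ≤ 13 * Qz a' c' m := by
      have := hb.2.2.2; rwa [show m + a' + c' = y2 by omega] at this
    have h3 : y3^2 ≤ 13 * Qz a' c' m := by
      have := hb.2.2.1; rwa [show m + c' = y3 by omega] at this
    have := nmax_sq_le (p := (y1, y2, y3)) (n := m) h1 h2 h3 hb.1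
    exact_mod_cast this
  have e1 := abs_phi_factor hGe
  have e2 := abs_phi_factor hHe
  rw [← hadef, ← hcdef] at e1
  rw [← ha'def, ← hc'def] at e2
  have hcon : 2 * ((|(a' : ℝ)| * |(c' : ℝ)|) * ((Qz a' c' m : ℤ) : ℝ))
      ≤ K * (2 * ((|(a : ℝ)| * |(c : ℝ)|) * ((Qz a c n : ℤ) : ℝ))) := by
    rw [← e1, ← e2]; exact hCon
  have e3 : ((phi (x1, x2, x3) n : ℤ) : ℝ)^2
      = 4 * (|(a : ℝ)| * |(c : ℝ)|)^2 * ((Qz a c n : ℤ) : ℝ)^2 := by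
    rw [← sq_abs, e1]; ring
  have PB := pointwise_bound (α := α) (β := β) (r := r) (p := p) (K := K)
    hu1 hv1 hQ1 hQ'1
    (by exact_mod_cast nmax_nonneg (x1, x2, x3) n)
    (by exact_mod_cast nmax_nonneg (y1, y2, y3) m)
    hK h13 h13' huQ hvQ' hcon hα0 hβ0 hrβ0 hθ hp
  rw [← hc₀] at PB
  have hR : ENNReal.ofReal c₀ * gfun p r (a, c, a', c')
      = ENNReal.ofReal (c₀ * (|(a:ℝ)| ^ (-p) * (|(c:ℝ)| ^ (-p)
          * (|(a':ℝ)| ^ (-r) * |(c':ℝ)| ^ (-r))))) := by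
    simp only [gfun]
    rw [← ENNReal.ofReal_mul (by positivity : (0:ℝ) ≤ |(a':ℝ)| ^ (-r)),
      ← ENNReal.ofReal_mul (by positivity : (0:ℝ) ≤ |(c:ℝ)| ^ (-p)),
      ← ENNReal.ofReal_mul (by positivity : (0:ℝ) ≤ |(a:ℝ)| ^ (-p)),
      ← ENNReal.ofReal_mul hc₀0.le]
  rw [hR]
  refine ENNReal.ofReal_le_ofReal ?_
  rw [e3]
  refine le_trans PB (le_of_eq ?_)
  rw [Real.mul_rpow (abs_nonneg _) (abs_nonneg _),
    Real.mul_rpow (abs_nonneg _) (abs_nonneg _)]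
  ring

set_option maxHeartbeats 1000000 in
/-- The second-generation counting estimate: for `3/10 < s ≤ 1/2`,
`0 < ε < (s − 3/10)/3`, `σ = s − 1/2 − ε` and `K ≥ 1`, there is `C > 0` such that for
every `n ∈ ℤ` and each of the four configurations `b` (attaching the second triple at
`n* ∈ {n₁,n₂,n₃,n}`),
`Σ (n_max⁽¹⁾)^{4s−6σ}(n_max⁽²⁾)^{−6σ}/φ₁² ≤ C`, the sum being over
`(n₁,n₂,n₃) ∈ Γ(n)`, `(m₁,m₂,m₃) ∈ Γ(n*)` with `|φ₂| ≤ K|φ₁|`. -/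
theorem second_generation_counting_bound (s ε σ K : ℝ)
    (hs0 : 3 / 10 < s) (hs : s ≤ 1 / 2) (hε0 : 0 < ε) (hε : ε < (s - 3 / 10) / 3)
    (hσ : σ = s - 1 / 2 - ε) (hK : 1 ≤ K) :
    ∃ C : ℝ, 0 < C ∧ ∀ (n : ℤ) (b : Fin 4),
      ∑' q : {q : (ℤ × ℤ × ℤ) × (ℤ × ℤ × ℤ) //
            q.1 ∈ Gamma n ∧
            q.2 ∈ Gamma (![q.1.1, q.1.2.1, q.1.2.2, n] b) ∧
            (|(phi q.2 (![q.1.1, q.1.2.1, q.1.2.2, n] b) : ℝ)|) ≤ K * |(phi q.1 n : ℝ)|},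
        ENNReal.ofReal
          ((nmax q.1.1 n : ℝ) ^ (4 * s - 6 * σ)
            * ((nmax q.1.2 (![q.1.1.1, q.1.1.2.1, q.1.1.2.2, n] b) : ℝ)) ^ (-6 * σ)
            / ((phi q.1.1 n : ℝ)) ^ 2)
      ≤ ENNReal.ofReal C := by
  have hK0 : (0:ℝ) < K := lt_of_lt_of_le one_pos hK
  set r : ℝ := s + 7/10 with hrdef
  set p : ℝ := 4 - ((-6*σ)/2 + (r - (-6*σ)/2)/2)
      - (((4*s-6*σ) + (-6*σ))/2 + (r - (-6*σ)/2)/2) with hpdef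
  set c₀ : ℝ := 13 ^ (((4*s-6*σ) + (-6*σ))/2) * K ^ ((-6*σ)/2 + (r - (-6*σ)/2)/2) / 4
    with hc₀def
  have hα0 : (0:ℝ) ≤ 4*s-6*σ := by rw [hσ]; linarith
  have hβ0 : (0:ℝ) ≤ -6*σ := by rw [hσ]; linarith
  have hr1 : 1 < r := by rw [hrdef]; linarith
  have hrβ0 : (0:ℝ) ≤ r - (-6*σ)/2 := by rw [hrdef, hσ]; linarith
  have hθ : ((4*s-6*σ) + (-6*σ))/2 + (r - (-6*σ)/2)/2 ≤ 2 := by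
    rw [hrdef, hσ]; linarith
  have hp1 : 1 < p := by
    rw [hpdef, hrdef, hσ]; linarith
  have hc₀0 : 0 < c₀ := by rw [hc₀def]; positivity
  set T : ℝ≥0∞ := ENNReal.ofReal c₀ * ∑' x : ℤ × ℤ × ℤ × ℤ, gfun p r x with hTdef
  have hTtop : T ≠ ⊤ :=
    ENNReal.mul_ne_top ENNReal.ofReal_ne_top (tsum_gfun_ne_top hp1 hr1)
  refine ⟨T.toReal + 1, by have := ENNReal.toReal_nonneg (a := T); linarith, ?_⟩
  intro n b
  have key : ∀ q : {q : (ℤ × ℤ × ℤ) × (ℤ × ℤ × ℤ) //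
        q.1 ∈ Gamma n ∧
        q.2 ∈ Gamma (![q.1.1, q.1.2.1, q.1.2.2, n] b) ∧
        (|(phi q.2 (![q.1.1, q.1.2.1, q.1.2.2, n] b) : ℝ)|) ≤ K * |(phi q.1 n : ℝ)|},
      ENNReal.ofReal
          ((nmax q.1.1 n : ℝ) ^ (4 * s - 6 * σ)
            * ((nmax q.1.2 (![q.1.1.1, q.1.1.2.1, q.1.1.2.2, n] b) : ℝ)) ^ (-6 * σ)
            / ((phi q.1.1 n : ℝ)) ^ 2)
        ≤ ENNReal.ofReal c₀ *
            gfun p r (q.1.1.1 - n, q.1.1.2.2 - n,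
              q.1.2.1 - ![q.1.1.1, q.1.1.2.1, q.1.1.2.2, n] b,
              q.1.2.2.2 - ![q.1.1.1, q.1.1.2.1, q.1.1.2.2, n] b) := by
    rintro ⟨⟨⟨x1, x2, x3⟩, y1, y2, y3⟩, ⟨hGe, hGx1, hGx3⟩, ⟨hHe, hHy1, hHy3⟩, hCon⟩
    exact per_term hK hα0 hβ0 hrβ0 hθ hpdef hc₀def hGe hGx1 hGx3 hHe hHy1 hHy3 hCon
  have hinj : Function.Injective
      (fun q : {q : (ℤ × ℤ × ℤ) × (ℤ × ℤ × ℤ) //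
        q.1 ∈ Gamma n ∧
        q.2 ∈ Gamma (![q.1.1, q.1.2.1, q.1.2.2, n] b) ∧
        (|(phi q.2 (![q.1.1, q.1.2.1, q.1.2.2, n] b) : ℝ)|) ≤ K * |(phi q.1 n : ℝ)|} =>
        ((q.1.1.1 - n, q.1.1.2.2 - n,
          q.1.2.1 - ![q.1.1.1, q.1.1.2.1, q.1.1.2.2, n] b,
          q.1.2.2.2 - ![q.1.1.1, q.1.1.2.1, q.1.1.2.2, n] b) : ℤ × ℤ × ℤ × ℤ)) := by
    rintro ⟨⟨⟨x1, x2, x3⟩, y1, y2, y3⟩, ⟨hGe, hGx1, hGx3⟩, ⟨hHe, hHy1, hHy3⟩, hCon⟩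
      ⟨⟨⟨x1', x2', x3'⟩, y1', y2', y3'⟩, ⟨hGe', hGx1', hGx3'⟩, ⟨hHe', hHy1', hHy3'⟩, hCon'⟩ hq
    simp only [Prod.mk.injEq] at hq
    dsimp only at hGe hGe' hHe hHe'
    obtain ⟨e1, e2, e3, e4⟩ := hq
    have hx1 : x1 = x1' := by omega
    have hx3 : x3 = x3' := by omega
    have hx2 : x2 = x2' := by omega
    subst hx1; subst hx2; subst hx3
    have hy1 : y1 = y1' := by linarith
    have hy3 : y3 = y3' := by linarith
    have hy2 : y2 = y2' := by linarith
    subst hy1; subst hy2; subst hy3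
    rfl
  refine le_trans (ENNReal.tsum_le_tsum key) ?_
  rw [ENNReal.tsum_mul_left]
  refine le_trans (mul_le_mul_right
    (ENNReal.tsum_comp_le_tsum_of_injective hinj (gfun p r)) _) ?_
  rw [← hTdef]
  exact le_trans (le_of_eq (ENNReal.ofReal_toReal hTtop).symm)
    (ENNReal.ofReal_le_ofReal (by linarith))
end

section
/- Let 1/6 < s ≤ 1/2, let 0 < ε < s − 1/6, and set σ = s − 1/2 − ε. Then there exists a constant C > 0 such that for every n ∈ ℤ and every (n₁,n₂,n₃) ∈ Γ(n), one has n_max^{−6σ} / |φ(n₁,n₂,n₃,n)| ≤ C / |μ(n₁,n₂,n₃,n)|^{2+3σ}, where moreover 2 + 3σ > 1. -/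
/-- The second-order resonance function `μ(n₁,n₂,n₃,n) = n₁² − n₂² + n₃² − n²`. -/
def mu (p : ℤ × ℤ × ℤ) (n : ℤ) : ℤ := p.1 ^ 2 - p.2.1 ^ 2 + p.2.2 ^ 2 - n ^ 2

set_option maxHeartbeats 1600000 in
/-- The pointwise weight bound behind the summation of each generation in the
iterated normal form reduction: for `1/6 < s ≤ 1/2`, `0 < ε < s − 1/6` and
`σ = s − 1/2 − ε`, one has `2 + 3σ > 1` and there is `C > 0` with
`n_max^{−6σ}/|φ| ≤ C/|μ|^{2+3σ}` on `Γ(n)` for every `n`. -/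
theorem pointwise_weight_bound (s ε σ : ℝ)
    (hs0 : 1 / 6 < s) (hs : s ≤ 1 / 2) (hε0 : 0 < ε) (hε : ε < s - 1 / 6)
    (hσ : σ = s - 1 / 2 - ε) :
    (1 : ℝ) < 2 + 3 * σ ∧
    ∃ C : ℝ, 0 < C ∧ ∀ (n : ℤ) (p : ℤ × ℤ × ℤ), p ∈ Gamma n →
      (nmax p n : ℝ) ^ (-6 * σ) / |(phi p n : ℝ)|
        ≤ C / |(mu p n : ℝ)| ^ (2 + 3 * σ) := by
  have hσneg : σ < 0 := by rw [hσ]; linarith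
  have hσgt : -1/3 < σ := by rw [hσ]; linarith
  have h1 : (1 : ℝ) < 2 + 3 * σ := by linarith
  refine ⟨h1, 400, by norm_num, ?_⟩
  rintro n ⟨n₁, n₂, n₃⟩ ⟨hc, hn1, hn3⟩
  simp only at hc hn1 hn3
  -- reparametrize: n₁ = n + a, n₃ = n + b, n₂ = n + a + b
  obtain ⟨a, rfl⟩ : ∃ a, n₁ = n + a := ⟨n₁ - n, by ring⟩
  obtain ⟨b, rfl⟩ : ∃ b, n₃ = n + b := ⟨n₃ - n, by ring⟩
  obtain rfl : n₂ = n + a + b := by omega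
  have ha0 : a ≠ 0 := by omega
  have hb0 : b ≠ 0 := by omega
  set K : ℤ := 6*n^2 + 6*n*(a+b) + 2*a^2 + 3*a*b + 2*b^2 with hK
  clear_value K
  have hμ : mu (n + a, n + a + b, n + b) n = -2*(a*b) := by
    simp only [mu]; ring
  have hφ : phi (n + a, n + a + b, n + b) n = mu (n + a, n + a + b, n + b) n * K := by
    simp only [phi, mu, hK]; ring
  have ha1 : 1 ≤ a^2 := by nlinarith [Int.one_le_abs ha0, sq_abs a, abs_nonneg a]
  have hb1 : 1 ≤ b^2 := by nlinarith [Int.one_le_abs hb0, sq_abs b, abs_nonneg b]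
  have hK1 : 1 ≤ K := by nlinarith [sq_nonneg (2*n+a+b)]
  have hμ2 : 2 ≤ |mu (n + a, n + a + b, n + b) n| := by
    rw [hμ, abs_mul, abs_mul, show |(-2:ℤ)| = 2 from by norm_num]
    have h1a := Int.one_le_abs ha0
    have h1b := Int.one_le_abs hb0
    nlinarith
  -- squares bounded by 25 K
  have hq1 : (n+a)^2 ≤ 25*K := by
    nlinarith [sq_nonneg (2*n+a+b), sq_nonneg (2*n+3*a+b), sq_nonneg (a-b), sq_nonneg (a+b)]
  have hq2 : (n+a+b)^2 ≤ 25*K := by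
    nlinarith [sq_nonneg (2*n+a+b), sq_nonneg (2*n+3*a+3*b), sq_nonneg (a-b), sq_nonneg (a+b)]
  have hq3 : (n+b)^2 ≤ 25*K := by
    nlinarith [sq_nonneg (2*n+a+b), sq_nonneg (2*n+a+3*b), sq_nonneg (a-b), sq_nonneg (a+b)]
  have hq0 : n^2 ≤ 25*K := by
    nlinarith [sq_nonneg (2*n+a+b), sq_nonneg (4*n+a+b), sq_nonneg (a-b), sq_nonneg (a+b)]
  set N : ℤ := nmax (n + a, n + a + b, n + b) n with hN
  have e1 : |n+a| ≤ N := by rw [hN]; exact le_max_of_le_left (le_max_left _ _)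
  have e2 : |n+a+b| ≤ N := by rw [hN]; exact le_max_of_le_left (le_max_right _ _)
  have e3 : |n+b| ≤ N := by rw [hN]; exact le_max_of_le_right (le_max_left _ _)
  have e4 : |n| ≤ N := by rw [hN]; exact le_max_of_le_right (le_max_right _ _)
  have hNcases : N = |n+a| ∨ N = |n+a+b| ∨ N = |n+b| ∨ N = |n| := by
    rw [hN]; unfold nmax
    rcases max_choice (max |n+a| |n+a+b|) (max |n+b| |n|) with h | h <;> rw [h]
    · rcases max_choice |n+a| |n+a+b| with h' | h' <;> rw [h'] <;> tauto
    · rcases max_choice |n+b| |n| with h' | h' <;> rw [h'] <;> tauto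
  clear_value N
  have hNsq : N^2 ≤ 25*K := by
    rcases hNcases with h | h | h | h <;> rw [h, sq_abs] <;> assumption
  have hN1 : 1 ≤ N := by
    by_contra h
    push_neg at h
    have h1' : |n+a| = 0 := le_antisymm (by omega) (abs_nonneg _)
    have h2' : |n| = 0 := le_antisymm (by omega) (abs_nonneg _)
    rw [abs_eq_zero] at h1' h2'
    omega
  have hμN : |mu (n + a, n + a + b, n + b) n| ≤ 4*N^2 := by
    have s1 : (n+a)^2 ≤ N^2 := by rw [← sq_abs (n+a)]; exact pow_le_pow_left₀ (abs_nonneg _) e1 2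
    have s2 : (n+a+b)^2 ≤ N^2 := by rw [← sq_abs (n+a+b)]; exact pow_le_pow_left₀ (abs_nonneg _) e2 2
    have s3 : (n+b)^2 ≤ N^2 := by rw [← sq_abs (n+b)]; exact pow_le_pow_left₀ (abs_nonneg _) e3 2
    have s4 : n^2 ≤ N^2 := by rw [← sq_abs n]; exact pow_le_pow_left₀ (abs_nonneg _) e4 2
    rw [abs_le]
    constructor <;> simp only [mu] <;>
      nlinarith [sq_nonneg (n+a), sq_nonneg (n+a+b), sq_nonneg (n+b), sq_nonneg n]
  -- move to the reals
  set m : ℝ := |(mu (n + a, n + a + b, n + b) n : ℝ)| with hm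
  set Kr : ℝ := (K : ℝ) with hKr
  set Nr : ℝ := (N : ℝ) with hNr
  have hmInt : m = ((|mu (n + a, n + a + b, n + b) n| : ℤ) : ℝ) := by
    rw [hm]; push_cast; ring
  have hm2 : (2 : ℝ) ≤ m := by rw [hmInt]; exact_mod_cast hμ2
  have hm0 : (0 : ℝ) < m := by linarith
  have hKr1 : (1 : ℝ) ≤ Kr := by rw [hKr]; exact_mod_cast hK1
  have hKr0 : (0 : ℝ) < Kr := by linarith
  have hNr1 : (1 : ℝ) ≤ Nr := by rw [hNr]; exact_mod_cast hN1
  have hNr0 : (0 : ℝ) < Nr := by linarith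
  have hNsqr : Nr^2 ≤ 25*Kr := by rw [hNr, hKr]; exact_mod_cast hNsq
  have hμNr : m ≤ 4*Nr^2 := by rw [hmInt, hNr]; exact_mod_cast hμN
  have hfabs : |(phi (n + a, n + a + b, n + b) n : ℝ)| = m * Kr := by
    rw [show ((phi (n + a, n + a + b, n + b) n : ℝ))
          = (mu (n + a, n + a + b, n + b) n : ℝ) * Kr by
        rw [hKr]; exact_mod_cast congrArg (fun z : ℤ => (z : ℝ)) hφ,
      abs_mul, ← hm, abs_of_pos hKr0]
  rw [hfabs]
  rw [div_le_div_iff₀ (by positivity) (Real.rpow_pos_of_pos hm0 _)]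
  -- key real-power chain
  have hexp0 : (0 : ℝ) ≤ 1 + 3*σ := by linarith
  have step1 : m ^ (2 + 3*σ) = m * m ^ (1 + 3*σ) := by
    rw [show (2 : ℝ) + 3*σ = 1 + (1 + 3*σ) by ring, Real.rpow_add hm0, Real.rpow_one]
  have step2 : m ^ (1 + 3*σ) ≤ (4*Nr^2) ^ (1 + 3*σ) :=
    Real.rpow_le_rpow (le_of_lt hm0) hμNr hexp0
  have step3 : (4*Nr^2 : ℝ) ^ (1 + 3*σ) = 4 ^ (1 + 3*σ) * Nr ^ (2 + 6*σ) := by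
    rw [Real.mul_rpow (by norm_num) (by positivity)]
    congr 1
    rw [← Real.rpow_natCast Nr 2, ← Real.rpow_mul (le_of_lt hNr0)]
    norm_num; ring_nf
  have step4 : (4 : ℝ) ^ (1 + 3*σ) ≤ 4 := by
    nth_rewrite 2 [show (4:ℝ) = 4 ^ (1:ℝ) by rw [Real.rpow_one]]
    exact Real.rpow_le_rpow_of_exponent_le (by norm_num) (by linarith)
  have step5 : Nr ^ (2 + 6*σ) * Nr ^ (-6*σ) = Nr ^ 2 := by
    rw [← Real.rpow_add hNr0, show (2 + 6*σ) + -6*σ = (2:ℝ) by ring,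
      ← Real.rpow_natCast Nr 2]
    norm_num
  have hpow_pos : (0:ℝ) < Nr ^ (-6*σ) := Real.rpow_pos_of_pos hNr0 _
  calc Nr ^ (-6*σ) * m ^ (2 + 3*σ)
      = m * (m ^ (1 + 3*σ) * Nr ^ (-6*σ)) := by rw [step1]; ring
    _ ≤ m * ((4*Nr^2) ^ (1 + 3*σ) * Nr ^ (-6*σ)) := by
        apply mul_le_mul_of_nonneg_left _ (le_of_lt hm0)
        exact mul_le_mul_of_nonneg_right step2 (le_of_lt hpow_pos)
    _ = m * (4 ^ (1 + 3*σ) * Nr ^ 2) := by rw [step3, mul_assoc, step5]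
    _ ≤ m * (4 * (25 * Kr)) := by
        apply mul_le_mul_of_nonneg_left _ (le_of_lt hm0)
        have h4 : (0:ℝ) ≤ (4:ℝ) ^ (1 + 3*σ) := le_of_lt (Real.rpow_pos_of_pos (by norm_num) _)
        nlinarith [sq_nonneg Nr]
    _ = 100 * (m * Kr) := by ring
    _ ≤ 400 * (m * Kr) := by nlinarith
end

section
/- Let 1/6 < s ≤ 1/2, let 0 < ε < (6s−1)/10, and set σ = s − 1/2 − ε. Then there exists a constant C > 0 such that for every n ∈ ℤ and every (n₁,n₂,n₃) ∈ Γ(n), one has n_max^{4s−6σ} / |φ(n₁,n₂,n₃,n)|^{2+2σ} ≤ C / |μ(n₁,n₂,n₃,n)|^{1+2s−2ε}, where moreover 1 + 2s − 2ε > 1. -/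
/-- The pointwise weight bound used for the resonant remainder terms `R^{(J+1)}`:
for `1/6 < s ≤ 1/2`, `0 < ε < (6s−1)/10` and `σ = s − 1/2 − ε`, one has
`1 + 2s − 2ε > 1` and there is `C > 0` with
`n_max^{4s−6σ}/|φ|^{2+2σ} ≤ C/|μ|^{1+2s−2ε}` on `Γ(n)` for every `n`. -/
theorem pointwise_weight_bound_resonant (s ε σ : ℝ)
    (hs0 : 1 / 6 < s) (hs : s ≤ 1 / 2) (hε0 : 0 < ε) (hε : ε < (6 * s - 1) / 10)
    (hσ : σ = s - 1 / 2 - ε) :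
    (1 : ℝ) < 1 + 2 * s - 2 * ε ∧
    ∃ C : ℝ, 0 < C ∧ ∀ (n : ℤ) (p : ℤ × ℤ × ℤ), p ∈ Gamma n →
      (nmax p n : ℝ) ^ (4 * s - 6 * σ) / |(phi p n : ℝ)| ^ (2 + 2 * σ)
        ≤ C / |(mu p n : ℝ)| ^ (1 + 2 * s - 2 * ε) := by
  subst hσ
  have hp1 : (1:ℝ) < 1 + 2 * s - 2 * ε := by nlinarith
  set P : ℝ := 1 + 2 * s - 2 * ε with hP
  have hPpos : 0 < P := by linarith
  refine ⟨hp1, (18:ℝ) ^ P, Real.rpow_pos_of_pos (by norm_num) _, ?_⟩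
  intro n p hp
  obtain ⟨hn, h1, h3⟩ := hp
  obtain ⟨a, hpa⟩ : ∃ a : ℤ, p.1 = n + a := ⟨p.1 - n, by ring⟩
  obtain ⟨c, hpc⟩ : ∃ c : ℤ, p.2.2 = n + c := ⟨p.2.2 - n, by ring⟩
  have hpb : p.2.1 = n + a + c := by omega
  have ha : a ≠ 0 := by omega
  have hc : c ≠ 0 := by omega
  set Q : ℤ := 6*n^2 + 6*n*(a+c) + 2*a^2 + 3*a*c + 2*c^2 with hQdef
  have ha1 : 1 ≤ a ^ 2 := by
    rcases lt_or_gt_of_ne ha with h | h <;> nlinarith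
  have hc1 : 1 ≤ c ^ 2 := by
    rcases lt_or_gt_of_ne hc with h | h <;> nlinarith
  have hQ2 : 2 * Q = 3 * (2*n+a+c)^2 + a^2 + c^2 := by rw [hQdef]; ring
  have hQpos : 0 < Q := by nlinarith [sq_nonneg (2*n+a+c)]
  have hmu : mu p n = -2 * a * c := by
    simp only [mu]; rw [hpa, hpb, hpc]; ring
  have hmune : mu p n ≠ 0 := by
    rw [hmu]; simp [ha, hc]
  have hphi : phi p n = mu p n * Q := by
    simp only [phi, hmu, hQdef]; rw [hpa, hpb, hpc]; ring
  -- bound nmax^2 ≤ 18 Q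
  have hb1 : p.1 ^ 2 ≤ 18 * Q := by
    rw [hpa]
    have hid : 4*(n+a)^2 + (((2*n+a+c)-a)^2 + (a+c)^2 + ((2*n+a+c)+c)^2)
        = 3*((2*n+a+c)^2 + a^2 + c^2) := by ring
    linarith [sq_nonneg ((2*n+a+c)-a), sq_nonneg (a+c), sq_nonneg ((2*n+a+c)+c),
      sq_nonneg (2*n+a+c), sq_nonneg a, sq_nonneg c, hQ2, hQpos]
  have hb2 : p.2.1 ^ 2 ≤ 18 * Q := by
    rw [hpb]
    have hid : 4*(n+a+c)^2 + (((2*n+a+c)-a)^2 + (a-c)^2 + ((2*n+a+c)-c)^2)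
        = 3*((2*n+a+c)^2 + a^2 + c^2) := by ring
    linarith [sq_nonneg ((2*n+a+c)-a), sq_nonneg (a-c), sq_nonneg ((2*n+a+c)-c),
      sq_nonneg (2*n+a+c), sq_nonneg a, sq_nonneg c, hQ2, hQpos]
  have hb3 : p.2.2 ^ 2 ≤ 18 * Q := by
    rw [hpc]
    have hid : 4*(n+c)^2 + (((2*n+a+c)+a)^2 + (a+c)^2 + ((2*n+a+c)-c)^2)
        = 3*((2*n+a+c)^2 + a^2 + c^2) := by ring
    linarith [sq_nonneg ((2*n+a+c)+a), sq_nonneg (a+c), sq_nonneg ((2*n+a+c)-c),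
      sq_nonneg (2*n+a+c), sq_nonneg a, sq_nonneg c, hQ2, hQpos]
  have hb4 : n ^ 2 ≤ 18 * Q := by
    have hid : 4*n^2 + (((2*n+a+c)+a)^2 + (a-c)^2 + ((2*n+a+c)+c)^2)
        = 3*((2*n+a+c)^2 + a^2 + c^2) := by ring
    linarith [sq_nonneg ((2*n+a+c)+a), sq_nonneg (a-c), sq_nonneg ((2*n+a+c)+c),
      sq_nonneg (2*n+a+c), sq_nonneg a, sq_nonneg c, hQ2, hQpos]
  have hmaxsq : nmax p n ^ 2 ≤ 18 * Q := by
    unfold nmax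
    rcases max_choice (max |p.1| |p.2.1|) (max |p.2.2| |n|) with h | h <;> rw [h]
    · rcases max_choice |p.1| |p.2.1| with h' | h' <;> rw [h', sq_abs] <;> assumption
    · rcases max_choice |p.2.2| |n| with h' | h' <;> rw [h', sq_abs] <;> assumption
  have hmax1 : 1 ≤ nmax p n := by
    have h3' : |p.1| ≤ nmax p n := le_trans (le_max_left _ _) (le_max_left _ _)
    have h4' : |n| ≤ nmax p n := le_trans (le_max_right _ _) (le_max_right _ _)
    have h5' : 0 ≤ |p.1| := abs_nonneg _
    have h6' : p.1 ≤ |p.1| ∧ -p.1 ≤ |p.1| := ⟨le_abs_self _, neg_le_abs _⟩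
    have h7' : n ≤ |n| ∧ -n ≤ |n| := ⟨le_abs_self _, neg_le_abs _⟩
    omega
  -- move to ℝ
  have hNR : (1:ℝ) ≤ (nmax p n : ℝ) := by exact_mod_cast hmax1
  have hQR : (0:ℝ) < (Q : ℝ) := by exact_mod_cast hQpos
  have hmuR : (0:ℝ) < |(mu p n : ℝ)| := abs_pos.mpr (by exact_mod_cast hmune)
  have hphiR : |(phi p n : ℝ)| = |(mu p n : ℝ)| * (Q : ℝ) := by
    have : (phi p n : ℝ) = (mu p n : ℝ) * (Q : ℝ) := by exact_mod_cast congrArg (Int.cast : ℤ → ℝ) hphi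
    rw [this, abs_mul, abs_of_pos hQR]
  have he1 : 4 * s - 6 * (s - 1/2 - ε) = 3 - 2*s + 6*ε := by ring
  have he2 : 2 + 2 * (s - 1/2 - ε) = P := by rw [hP]; ring
  rw [he1, he2, hphiR]
  have hQPpos : (0:ℝ) < (Q:ℝ) ^ P := Real.rpow_pos_of_pos hQR _
  have hmuPpos : (0:ℝ) < |(mu p n : ℝ)| ^ P := Real.rpow_pos_of_pos hmuR _
  have key : (nmax p n : ℝ) ^ (3 - 2*s + 6*ε) ≤ (18:ℝ) ^ P * (Q:ℝ) ^ P := by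
    have step1 : (nmax p n : ℝ) ^ (3 - 2*s + 6*ε) ≤ (nmax p n : ℝ) ^ (2 * P) :=
      Real.rpow_le_rpow_of_exponent_le hNR (by rw [hP]; nlinarith)
    have step2 : (nmax p n : ℝ) ^ (2 * P) = ((nmax p n : ℝ) ^ 2) ^ P := by
      rw [← Real.rpow_natCast ((nmax p n : ℝ)) 2, ← Real.rpow_mul (by linarith)]
      norm_num
    have hsq : ((nmax p n : ℝ) ^ 2) ≤ 18 * (Q:ℝ) := by exact_mod_cast hmaxsq
    have step3 : ((nmax p n : ℝ) ^ 2) ^ P ≤ (18 * (Q:ℝ)) ^ P :=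
      Real.rpow_le_rpow (by positivity) hsq hPpos.le
    have step4 : (18 * (Q:ℝ)) ^ P = (18:ℝ) ^ P * (Q:ℝ) ^ P :=
      Real.mul_rpow (by norm_num) hQR.le
    calc (nmax p n : ℝ) ^ (3 - 2*s + 6*ε) ≤ (nmax p n : ℝ) ^ (2 * P) := step1
      _ = ((nmax p n : ℝ) ^ 2) ^ P := step2
      _ ≤ (18 * (Q:ℝ)) ^ P := step3
      _ = (18:ℝ) ^ P * (Q:ℝ) ^ P := step4
  rw [Real.mul_rpow hmuR.le hQR.le, div_le_div_iff₀ (by positivity) hmuPpos]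
  calc (nmax p n : ℝ) ^ (3 - 2*s + 6*ε) * |(mu p n : ℝ)| ^ P
      ≤ ((18:ℝ) ^ P * (Q:ℝ) ^ P) * |(mu p n : ℝ)| ^ P :=
        mul_le_mul_of_nonneg_right key hmuPpos.le
    _ = (18:ℝ) ^ P * (|(mu p n : ℝ)| ^ P * (Q:ℝ) ^ P) := by ring
end

section
/- Let J ≥ 2 be an integer and let φ₁, …, φ_J be real numbers; set the partial sums φ̃_j = φ₁ + ⋯ + φ_j for 1 ≤ j ≤ J. Assume |φ₁| ≥ 1 and |φ̃_j| ≥ 2(2j+2)³ · max(|φ̃_{j−1}|, |φ₁|) for every 2 ≤ j ≤ J. Then ∏_{j=1}^{J} φ̃_j² ≥ φ₁² · ∏_{j=2}^{J} (2j)³ |φ_j|. -/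
/-!
The inequality holds factor by factor. Since `max(|φ̃_{j-1}|, |φ₁|) ≥ 1`, the growth hypothesis
gives both `|φ̃_{j-1}| ≤ |φ̃_j|` and `2(2j+2)³ ≤ |φ̃_j|`, hence
`(2j)³|φ_j| ≤ (2j+2)³(|φ̃_j| + |φ̃_{j-1}|) ≤ 2(2j+2)³|φ̃_j| ≤ φ̃_j²`.
-/

open Finset

lemma mul_abs_sub_le_sq {a b c M : ℝ} (hc : 1 ≤ 2 * c) (hM : 1 ≤ M) (hb : |b| ≤ M)
    (h : 2 * c * M ≤ |a|) : c * |a - b| ≤ a ^ 2 := by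
  have h2c : 2 * c ≤ |a| := by nlinarith
  have hba : |b| ≤ |a| := by nlinarith
  calc c * |a - b| ≤ c * (|a| + |b|) :=
        mul_le_mul_of_nonneg_left (abs_sub a b) (by linarith)
    _ ≤ 2 * c * |a| := by nlinarith
    _ ≤ |a| * |a| := by gcongr
    _ = a ^ 2 := by rw [← sq, sq_abs]

lemma sum_Icc_one_sub_sum_Icc_one_pred {M : Type*} [AddCommGroup M] (f : ℕ → M) {j : ℕ}
    (hj : 1 ≤ j) : ∑ k ∈ Icc 1 j, f k - ∑ k ∈ Icc 1 (j - 1), f k = f j := by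
  obtain ⟨i, rfl⟩ := Nat.exists_eq_add_of_le' hj
  rw [Nat.add_sub_cancel, sum_Icc_succ_top (by omega), add_sub_cancel_left]

/-- Product lower bound on the cumulative phases in the iterated normal form
reduction: if `φ̃_j = φ₁ + ⋯ + φ_j`, `|φ₁| ≥ 1` and
`|φ̃_j| ≥ 2(2j+2)³ max(|φ̃_{j−1}|, |φ₁|)` for `2 ≤ j ≤ J`, then
`∏_{j=1}^J φ̃_j² ≥ φ₁² ∏_{j=2}^J (2j)³|φ_j|`. -/
theorem cumulative_phase_product_lower_bound (J : ℕ) (hJ : 2 ≤ J)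
    (φ φt : ℕ → ℝ) (hφt : ∀ j, φt j = ∑ k ∈ Finset.Icc 1 j, φ k)
    (h1 : 1 ≤ |φ 1|)
    (h2 : ∀ j, 2 ≤ j → j ≤ J →
      2 * (2 * (j : ℝ) + 2) ^ 3 * max |φt (j - 1)| |φ 1| ≤ |φt j|) :
    (φ 1) ^ 2 * ∏ j ∈ Finset.Icc 2 J, ((2 * (j : ℝ)) ^ 3 * |φ j|)
      ≤ ∏ j ∈ Finset.Icc 1 J, (φt j) ^ 2 := by
  have factor_le : ∀ j ∈ Icc 2 J, (2 * (j : ℝ)) ^ 3 * |φ j| ≤ φt j ^ 2 := by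
    intro j hj
    obtain ⟨hj2, hjJ⟩ := mem_Icc.mp hj
    have hφj : φ j = φt j - φt (j - 1) := by
      rw [hφt, hφt, sum_Icc_one_sub_sum_Icc_one_pred φ (by omega)]
    have hj2' : (2 : ℝ) ≤ j := by exact_mod_cast hj2
    calc (2 * (j : ℝ)) ^ 3 * |φ j| ≤ (2 * j + 2) ^ 3 * |φt j - φt (j - 1)| := by
          rw [hφj]; gcongr; linarith
      _ ≤ φt j ^ 2 := by
          have hc : (1 : ℝ) ≤ (2 * j + 2) ^ 3 := one_le_pow₀ (by linarith)
          exact mul_abs_sub_le_sq (by linarith) (h1.trans (le_max_right _ _)) (le_max_left _ _)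
            (h2 j hj2 hjJ)
  have hφt1 : φt 1 = φ 1 := by simp [hφt 1]
  rw [← insert_Icc_add_one_left_eq_Icc (by omega : 1 ≤ J), prod_insert (by simp), hφt1]
  exact mul_le_mul_of_nonneg_left (prod_le_prod (fun j _ => by positivity) factor_le) (sq_nonneg _)
end

section
/- Let 3/10 < s ≤ 1/2, let 0 < ε < (s − 3/10)/3, and set σ = s − 1/2 − ε. Then there exist δ > 0 and a constant C > 0 such that for every n ∈ ℤ and every (n₁,n₂,n₃) ∈ Γ(n), one has both n_max^{4s−6σ} / |φ(n₁,n₂,n₃,n)|^{6/5} ≤ C / |μ(n₁,n₂,n₃,n)|^{1+δ} and n_max^{−6σ} / |φ(n₁,n₂,n₃,n)|^{4/5} ≤ C / |μ(n₁,n₂,n₃,n)|^{1+δ}. -/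
lemma aux_rpow (M U P e r d : ℝ) (hM : 1 ≤ M) (hU : 1 ≤ U) (hUM : U ≤ 8 * M ^ 2)
    (hP : U * M ^ 2 / 2 ≤ P) (hr0 : 0 < r) (hr2 : r ≤ 2)
    (hb0 : 0 ≤ 2 * r - e) (hb2 : 2 * r - e ≤ 2) (hd : 1 + d ≤ r + (2 * r - e) / 2) :
    M ^ e / P ^ r ≤ 32 / U ^ (1 + d) := by
  have hM0 : (0:ℝ) < M := lt_of_lt_of_le one_pos hM
  have hU0 : (0:ℝ) < U := lt_of_lt_of_le one_pos hU
  have hP0 : (0:ℝ) < P := lt_of_lt_of_le (by positivity) hP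
  rw [div_le_div_iff₀ (by positivity) (by positivity)]
  have hM2 : (M:ℝ) ^ (2:ℕ) = M ^ ((2:ℕ):ℝ) := (Real.rpow_natCast M 2).symm
  have key1 : U ^ (1 + d) ≤ U ^ (r + (2 * r - e) / 2) :=
    Real.rpow_le_rpow_of_exponent_le hU hd
  have key2 : U ^ ((2 * r - e) / 2) ≤ (8 * M ^ 2) ^ ((2 * r - e) / 2) :=
    Real.rpow_le_rpow hU0.le hUM (by linarith)
  have key3 : (8 * M ^ 2 : ℝ) ^ ((2 * r - e) / 2)
      = (8:ℝ) ^ ((2 * r - e) / 2) * M ^ (2 * r - e) := by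
    rw [Real.mul_rpow (by norm_num) (by positivity), hM2, ← Real.rpow_mul hM0.le]
    push_cast
    rw [show (2:ℝ) * ((2 * r - e) / 2) = 2 * r - e from by ring]
  have key4 : (8:ℝ) ^ ((2 * r - e) / 2) ≤ 8 := by
    calc (8:ℝ) ^ ((2 * r - e) / 2) ≤ (8:ℝ) ^ (1:ℝ) :=
          Real.rpow_le_rpow_of_exponent_le (by norm_num) (by linarith)
      _ = 8 := Real.rpow_one 8
  have step1 : M ^ e * U ^ (1 + d) ≤ 8 * (U ^ r * M ^ (2 * r)) := by
    calc M ^ e * U ^ (1 + d) ≤ M ^ e * U ^ (r + (2 * r - e) / 2) := by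
          exact mul_le_mul_of_nonneg_left key1 (by positivity)
      _ = M ^ e * (U ^ r * U ^ ((2 * r - e) / 2)) := by rw [Real.rpow_add hU0]
      _ ≤ M ^ e * (U ^ r * ((8:ℝ) ^ ((2 * r - e) / 2) * M ^ (2 * r - e))) := by
          rw [← key3]
          exact mul_le_mul_of_nonneg_left
            (mul_le_mul_of_nonneg_left key2 (by positivity)) (by positivity)
      _ ≤ M ^ e * (U ^ r * (8 * M ^ (2 * r - e))) := by
          have := mul_le_mul_of_nonneg_right key4 (Real.rpow_nonneg hM0.le (2 * r - e))
          nlinarith [Real.rpow_pos_of_pos hM0 e, Real.rpow_pos_of_pos hU0 r,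
            Real.rpow_nonneg hM0.le (2*r-e),
            mul_le_mul_of_nonneg_left (mul_le_mul_of_nonneg_right key4
              (Real.rpow_nonneg hM0.le (2 * r - e)))
              (mul_nonneg (Real.rpow_nonneg hM0.le e) (Real.rpow_nonneg hU0.le r))]
      _ = 8 * (U ^ r * (M ^ e * M ^ (2 * r - e))) := by ring
      _ = 8 * (U ^ r * M ^ (2 * r)) := by
          rw [← Real.rpow_add hM0]; ring_nf
  have step2 : U ^ r * M ^ (2 * r) ≤ 4 * P ^ r := by
    have h1 : (U * M ^ 2 / 2) ^ r ≤ P ^ r :=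
      Real.rpow_le_rpow (by positivity) hP hr0.le
    have h2 : (U * M ^ 2 / 2 : ℝ) ^ r = U ^ r * M ^ (2 * r) / (2:ℝ) ^ r := by
      rw [Real.div_rpow (by positivity) (by norm_num),
        Real.mul_rpow hU0.le (by positivity), hM2, ← Real.rpow_mul hM0.le]
      push_cast
      rw [show (2:ℝ) * r = 2 * r from rfl]
    have h3 : (2:ℝ) ^ r ≤ 4 := by
      calc (2:ℝ) ^ r ≤ (2:ℝ) ^ (2:ℝ) :=
            Real.rpow_le_rpow_of_exponent_le one_le_two hr2
        _ = 4 := by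
            rw [show (2:ℝ) = ((2:ℕ):ℝ) from by norm_num, Real.rpow_natCast]; norm_num
    have h4 : (0:ℝ) < (2:ℝ) ^ r := Real.rpow_pos_of_pos two_pos r
    have h5 : U ^ r * M ^ (2 * r) / 4 ≤ U ^ r * M ^ (2 * r) / (2:ℝ) ^ r := by
      apply div_le_div_of_nonneg_left (by positivity) h4 h3
    nlinarith [h1, h2 ▸ h1]
  calc M ^ e * U ^ (1 + d) ≤ 8 * (U ^ r * M ^ (2 * r)) := step1
    _ ≤ 8 * (4 * P ^ r) := by linarith [step2]
    _ = 32 * P ^ r := by ring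

set_option maxHeartbeats 1000000 in
/-- The two pointwise weight bounds (splitting exponent `α = 4/5`) behind the
nearly resonant terms `N₁^{(J+1)}`: for `3/10 < s ≤ 1/2`, `0 < ε < (s − 3/10)/3`
and `σ = s − 1/2 − ε`, there are `δ > 0` and `C > 0` such that on `Γ(n)`, for every
`n`, both `n_max^{4s−6σ}/|φ|^{6/5} ≤ C/|μ|^{1+δ}` and
`n_max^{−6σ}/|φ|^{4/5} ≤ C/|μ|^{1+δ}` hold. -/
theorem pointwise_weight_bounds_nearly_resonant (s ε σ : ℝ)
    (hs0 : 3 / 10 < s) (hs : s ≤ 1 / 2) (hε0 : 0 < ε) (hε : ε < (s - 3 / 10) / 3)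
    (hσ : σ = s - 1 / 2 - ε) :
    ∃ δ : ℝ, 0 < δ ∧ ∃ C : ℝ, 0 < C ∧
      ∀ (n : ℤ) (p : ℤ × ℤ × ℤ), p ∈ Gamma n →
        (nmax p n : ℝ) ^ (4 * s - 6 * σ) / |(phi p n : ℝ)| ^ ((6 : ℝ) / 5)
            ≤ C / |(mu p n : ℝ)| ^ (1 + δ) ∧
        (nmax p n : ℝ) ^ (-6 * σ) / |(phi p n : ℝ)| ^ ((4 : ℝ) / 5)
            ≤ C / |(mu p n : ℝ)| ^ (1 + δ) := by
  subst hσ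
  refine ⟨min (1/5) (3*s - 9/10 - 3*ε), lt_min (by norm_num) (by linarith), 32, by norm_num, ?_⟩
  rintro n ⟨n₁, n₂, n₃⟩ ⟨hn, h1, h3⟩
  simp only at hn h1 h3
  have hn2 : n₂ = n₁ + n₃ - n := by omega
  subst hn2
  set Q : ℤ := 2*n₁^2 + 2*n₃^2 + n^2 + 3*n₁*n₃ - n*n₁ - n*n₃ with hQdef
  set M : ℤ := nmax (n₁, n₁ + n₃ - n, n₃) n with hMdef
  have hMn₁ : |n₁| ≤ M := le_trans (le_max_left _ _) (le_max_left _ _)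
  have hMn₂ : |n₁ + n₃ - n| ≤ M := le_trans (le_max_right _ _) (le_max_left _ _)
  have hMn₃ : |n₃| ≤ M := le_trans (le_max_left _ _) (le_max_right _ _)
  have hMn : |n| ≤ M := le_trans (le_max_right _ _) (le_max_right _ _)
  have hM1 : 1 ≤ M := by
    rcases le_or_gt 1 M with h | h
    · exact h
    · exfalso
      have e1 : |n₁| = 0 := le_antisymm (by omega) (abs_nonneg _)
      have e2 : |n| = 0 := le_antisymm (by omega) (abs_nonneg _)
      rw [abs_eq_zero] at e1 e2
      exact h1 (by omega)
  have hmu : mu (n₁, n₁ + n₃ - n, n₃) n = -2 * (n₁ - n) * (n₃ - n) := by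
    simp only [mu]; ring
  have hphi : phi (n₁, n₁ + n₃ - n, n₃) n = mu (n₁, n₁ + n₃ - n, n₃) n * Q := by
    simp only [phi, mu, hQdef]; ring
  have ha : 1 ≤ |n₁ - n| := abs_pos.mpr (sub_ne_zero.mpr h1)
  have hc : 1 ≤ |n₃ - n| := abs_pos.mpr (sub_ne_zero.mpr h3)
  have hmuabs : |mu (n₁, n₁ + n₃ - n, n₃) n| = 2 * |n₁ - n| * |n₃ - n| := by
    rw [hmu, abs_mul, abs_mul]
    norm_num
  have hU2 : 2 ≤ |mu (n₁, n₁ + n₃ - n, n₃) n| := by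
    rw [hmuabs]; nlinarith
  have hUM : |mu (n₁, n₁ + n₃ - n, n₃) n| ≤ 8 * M ^ 2 := by
    rw [hmuabs]
    have e1 : |n₁ - n| ≤ 2 * M := le_trans (abs_sub _ _) (by omega)
    have e2 : |n₃ - n| ≤ 2 * M := le_trans (abs_sub _ _) (by omega)
    nlinarith [abs_nonneg (n₁ - n), abs_nonneg (n₃ - n)]
  have k1 : n₁ ^ 2 ≤ 2 * Q := by
    nlinarith [sq_nonneg (n₁ - 2*n), sq_nonneg (n₁ + 3*n₃ - 2*n), sq_nonneg (n₁ + n₃)]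
  have k3 : n₃ ^ 2 ≤ 2 * Q := by
    nlinarith [sq_nonneg (n₃ - 2*n), sq_nonneg (n₃ + 3*n₁ - 2*n), sq_nonneg (n₁ + n₃)]
  have k4 : n ^ 2 ≤ 2 * Q := by
    nlinarith [sq_nonneg (2*n₁ - n), sq_nonneg (n₁ + 3*n₃ - 2*n), sq_nonneg (n₁ + n₃)]
  have k2 : (n₁ + n₃ - n) ^ 2 ≤ 2 * Q := by
    nlinarith [sq_nonneg (n₃ + n - n₁), sq_nonneg (n₁ - n₃ + 2*n), sq_nonneg (n₁ + n₃)]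
  have h2Q : M ^ 2 ≤ 2 * Q := by
    have h4 : M = |n₁| ∨ M = |n₁ + n₃ - n| ∨ M = |n₃| ∨ M = |n| := by
      rw [hMdef]
      simp only [nmax]
      rcases max_choice (max |n₁| |n₁ + n₃ - n|) (max |n₃| |n|) with h | h <;> rw [h] <;>
        [rcases max_choice |n₁| |n₁ + n₃ - n| with h' | h'; rcases max_choice |n₃| |n| with h' | h'] <;>
        rw [h'] <;> tauto
    rcases h4 with h | h | h | h <;> rw [h, sq_abs] <;> assumption
  have hQ1 : 1 ≤ Q := by nlinarith
  have hphiabs : |phi (n₁, n₁ + n₃ - n, n₃) n| = |mu (n₁, n₁ + n₃ - n, n₃) n| * Q := by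
    rw [hphi, abs_mul, abs_of_pos (by omega : (0:ℤ) < Q)]
  -- real setup
  have hMr : (1:ℝ) ≤ ((M : ℤ) : ℝ) := by exact_mod_cast hM1
  have hUr : (1:ℝ) ≤ |((mu (n₁, n₁ + n₃ - n, n₃) n : ℤ) : ℝ)| := by
    rw [← Int.cast_abs]
    have : ((2:ℤ):ℝ) ≤ ((|mu (n₁, n₁ + n₃ - n, n₃) n| : ℤ) : ℝ) := by exact_mod_cast hU2
    norm_num at this ⊢
    linarith
  have hUrM : |((mu (n₁, n₁ + n₃ - n, n₃) n : ℤ) : ℝ)| ≤ 8 * ((M : ℤ) : ℝ) ^ 2 := by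
    rw [← Int.cast_abs]
    exact_mod_cast hUM
  have hPr : |((mu (n₁, n₁ + n₃ - n, n₃) n : ℤ) : ℝ)| * ((M : ℤ) : ℝ) ^ 2 / 2
      ≤ |((phi (n₁, n₁ + n₃ - n, n₃) n : ℤ) : ℝ)| := by
    have e1 : |((phi (n₁, n₁ + n₃ - n, n₃) n : ℤ) : ℝ)|
        = |((mu (n₁, n₁ + n₃ - n, n₃) n : ℤ) : ℝ)| * ((Q : ℤ) : ℝ) := by
      rw [← Int.cast_abs, ← Int.cast_abs]
      exact_mod_cast hphiabs
    have e2 : ((M : ℤ) : ℝ) ^ 2 / 2 ≤ ((Q : ℤ) : ℝ) := by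
      have : ((M^2 : ℤ) : ℝ) ≤ ((2*Q : ℤ) : ℝ) := by exact_mod_cast h2Q
      push_cast at this
      linarith
    rw [e1]
    have hU0 : (0:ℝ) ≤ |((mu (n₁, n₁ + n₃ - n, n₃) n : ℤ) : ℝ)| := abs_nonneg _
    calc |((mu (n₁, n₁ + n₃ - n, n₃) n : ℤ) : ℝ)| * ((M : ℤ) : ℝ) ^ 2 / 2
        = |((mu (n₁, n₁ + n₃ - n, n₃) n : ℤ) : ℝ)| * (((M : ℤ) : ℝ) ^ 2 / 2) := by ring
      _ ≤ |((mu (n₁, n₁ + n₃ - n, n₃) n : ℤ) : ℝ)| * ((Q : ℤ) : ℝ) :=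
          mul_le_mul_of_nonneg_left e2 hU0
  have hδ1 : min (1/5) (3*s - 9/10 - 3*ε) ≤ 1/5 := min_le_left _ _
  have hδ2 : min (1/5) (3*s - 9/10 - 3*ε) ≤ 3*s - 9/10 - 3*ε := min_le_right _ _
  constructor
  · exact aux_rpow _ _ _ (4 * s - 6 * (s - 1/2 - ε)) (6/5) (min (1/5) (3*s - 9/10 - 3*ε))
      hMr hUr hUrM hPr (by norm_num) (by norm_num) (by linarith) (by linarith) (by linarith)
  · exact aux_rpow _ _ _ (-6 * (s - 1/2 - ε)) (4/5) (min (1/5) (3*s - 9/10 - 3*ε))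
      hMr hUr hUrM hPr (by norm_num) (by norm_num) (by linarith) (by linarith) (by linarith)
end

section
/- Let 1/4 < s ≤ 1/2, let 0 < ε < (4s−1)/6, and set σ = s − 1/2 − ε. Then sup_{n∈ℤ} Σ_{(n₁,n₂,n₃)∈Γ(n)} n_max^{4s−12σ} / φ(n₁,n₂,n₃,n)² < ∞, where n_max = max(|n₁|,|n₂|,|n₃|,|n|). -/
lemma int_one_le_sq {a : ℤ} (ha : a ≠ 0) : (1 : ℤ) ≤ a ^ 2 := by
  rcases lt_or_gt_of_ne ha with h | h <;> nlinarith

set_option maxHeartbeats 1000000 in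
/-- Pointwise bound: on `Γ(n)` one has `nmax^α/φ² ≤ 36/((n₁-n)²(n₃-n)²)` for `α ≤ 4`. -/
lemma key_bound {n : ℤ} {α : ℝ} (hα : α ≤ 4) {p : ℤ × ℤ × ℤ} (hp : p ∈ Gamma n) :
    ((nmax p n : ℝ)) ^ α / ((phi p n : ℝ)) ^ 2 ≤
      36 * (1 / (((p.1 - n : ℤ) : ℝ)) ^ 2 * (1 / (((p.2.2 - n : ℤ) : ℝ)) ^ 2)) := by
  obtain ⟨hn, ha, hb⟩ := hp
  have ha' : p.1 - n ≠ 0 := sub_ne_zero.mpr ha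
  have hb' : p.2.2 - n ≠ 0 := sub_ne_zero.mpr hb
  have h2 : p.2.1 = p.1 + p.2.2 - n := by omega
  set a : ℤ := p.1 - n with hadef
  set b : ℤ := p.2.2 - n with hbdef
  set q : ℤ := 6 * n ^ 2 + 6 * n * (a + b) + 2 * a ^ 2 + 3 * a * b + 2 * b ^ 2 with hqdef
  have hphi : phi p n = -2 * a * b * q := by
    simp only [phi]; rw [h2, hqdef, hadef, hbdef]; ring
  have hq2 : 2 * q = 3 * (2 * n + a + b) ^ 2 + a ^ 2 + b ^ 2 := by rw [hqdef]; ring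
  have ha2 : (1 : ℤ) ≤ a ^ 2 := int_one_le_sq ha'
  have hb2 : (1 : ℤ) ≤ b ^ 2 := int_one_le_sq hb'
  have hq1 : (1 : ℤ) ≤ q := by
    have h0 := sq_nonneg (2 * n + a + b)
    linarith
  -- bound on nmax
  have e1 : |p.1| ≤ |n| + |a| := by
    calc |p.1| = |n + a| := by congr 1; rw [hadef]; ring
    _ ≤ |n| + |a| := abs_add_le _ _
  have e3 : |p.2.2| ≤ |n| + |b| := by
    calc |p.2.2| = |n + b| := by congr 1; rw [hbdef]; ring
    _ ≤ |n| + |b| := abs_add_le _ _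
  have e2 : |p.2.1| ≤ |n| + |a| + |b| := by
    have h5 := abs_add_le (n + a) b
    have h6 := abs_add_le n a
    calc |p.2.1| = |n + a + b| := by congr 1; rw [h2, hadef, hbdef]; ring
    _ ≤ |n| + |a| + |b| := by linarith
  have hMle : nmax p n ≤ |n| + |a| + |b| := by
    have h0a := abs_nonneg a
    have h0b := abs_nonneg b
    simp only [nmax, max_le_iff]
    exact ⟨⟨by linarith, e2⟩, by linarith, by linarith⟩
  have hM0 : (0 : ℤ) ≤ nmax p n :=
    le_trans (abs_nonneg p.1) (le_trans (le_max_left _ _) (le_max_left _ _))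
  have hM1 : (1 : ℤ) ≤ nmax p n := by
    have hA : |p.1| ≤ nmax p n := le_trans (le_max_left _ _) (le_max_left _ _)
    have hN : |n| ≤ nmax p n := le_trans (le_max_right _ _) (le_max_right _ _)
    rcases eq_or_ne n 0 with h | h
    · have hp0 : p.1 ≠ 0 := by omega
      exact le_trans (Int.one_le_abs hp0) hA
    · exact le_trans (Int.one_le_abs h) hN
  have hM12 : (nmax p n) ^ 2 ≤ 12 * q := by
    have hs2 : (|n| + |a| + |b|) ^ 2 ≤ 3 * (n ^ 2 + a ^ 2 + b ^ 2) := by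
      nlinarith [sq_nonneg (|n| - |a|), sq_nonneg (|n| - |b|), sq_nonneg (|a| - |b|),
        sq_abs n, sq_abs a, sq_abs b]
    have h4 : n ^ 2 + a ^ 2 + b ^ 2 ≤ 4 * q := by
      nlinarith [sq_nonneg (23 * n + 12 * (a + b)), sq_nonneg (a - b), sq_nonneg (a + b)]
    have hMsq : (nmax p n) ^ 2 ≤ (|n| + |a| + |b|) ^ 2 := by nlinarith [hMle, hM0]
    linarith
  -- move to the reals
  set A : ℝ := ((a : ℤ) : ℝ) with hAdef
  set B : ℝ := ((b : ℤ) : ℝ) with hBdef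
  set Q : ℝ := ((q : ℤ) : ℝ) with hQdef
  set M : ℝ := ((nmax p n : ℤ) : ℝ) with hMdef
  have hA1 : (1 : ℝ) ≤ A ^ 2 := by rw [hAdef]; exact_mod_cast ha2
  have hB1 : (1 : ℝ) ≤ B ^ 2 := by rw [hBdef]; exact_mod_cast hb2
  have hQ1 : (1 : ℝ) ≤ Q := by rw [hQdef]; exact_mod_cast hq1
  have hM1' : (1 : ℝ) ≤ M := by rw [hMdef]; exact_mod_cast hM1
  have hM12' : M ^ 2 ≤ 12 * Q := by rw [hMdef, hQdef]; exact_mod_cast hM12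
  have hphiR : ((phi p n : ℤ) : ℝ) = -2 * A * B * Q := by
    rw [hphi, hAdef, hBdef, hQdef]; push_cast; ring
  have hMα : M ^ α ≤ 144 * Q ^ 2 := by
    have h1 : M ^ α ≤ M ^ (4 : ℝ) := Real.rpow_le_rpow_of_exponent_le hM1' hα
    have h2 : M ^ (4 : ℝ) = M ^ (4 : ℕ) := by
      rw [← Real.rpow_natCast M 4]; norm_num
    have h3 : M ^ (4 : ℕ) ≤ 144 * Q ^ 2 := by nlinarith [hM12', hM1', hQ1]
    calc M ^ α ≤ M ^ (4 : ℝ) := h1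
    _ = M ^ (4 : ℕ) := h2
    _ ≤ 144 * Q ^ 2 := h3
  have hrhs : 36 * (1 / A ^ 2 * (1 / B ^ 2)) = 36 / (A ^ 2 * B ^ 2) := by ring
  rw [hphiR, hrhs]
  have hAB : (1 : ℝ) ≤ A ^ 2 * B ^ 2 := by nlinarith [hA1, hB1]
  have hQ2 : (1 : ℝ) ≤ Q ^ 2 := by nlinarith [hQ1]
  have h4Q : (1 : ℝ) ≤ A ^ 2 * B ^ 2 * Q ^ 2 := by
    calc (1 : ℝ) = 1 * 1 := by ring
    _ ≤ (A ^ 2 * B ^ 2) * Q ^ 2 :=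
        mul_le_mul hAB hQ2 zero_le_one (le_trans zero_le_one hAB)
  have hexp : (-2 * A * B * Q) ^ 2 = 4 * (A ^ 2 * B ^ 2 * Q ^ 2) := by ring
  have hden1 : (0 : ℝ) < (-2 * A * B * Q) ^ 2 := by linarith
  have hden2 : (0 : ℝ) < A ^ 2 * B ^ 2 := by nlinarith [hA1, hB1]
  rw [div_le_div_iff₀ hden1 hden2]
  have hABnn : (0 : ℝ) ≤ A ^ 2 * B ^ 2 := le_of_lt hden2
  calc M ^ α * (A ^ 2 * B ^ 2) ≤ 144 * Q ^ 2 * (A ^ 2 * B ^ 2) :=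
        mul_le_mul_of_nonneg_right hMα hABnn
    _ = 36 * (-2 * A * B * Q) ^ 2 := by ring

set_option maxHeartbeats 1000000 in
/-- For `1/4 < s ≤ 1/2`, `0 < ε < (4s−1)/6` and `σ = s − 1/2 − ε`, one has
`sup_{n∈ℤ} Σ_{Γ(n)} n_max^{4s−12σ} / φ² < ∞`. -/
theorem sup_sum_nmax_pow_div_phi_sq_lt_top' (s ε σ : ℝ)
    (hs0 : 1 / 4 < s) (hs : s ≤ 1 / 2) (hε0 : 0 < ε) (hε : ε < (4 * s - 1) / 6)
    (hσ : σ = s - 1 / 2 - ε) :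
    ∃ C : ℝ, ∀ n : ℤ,
      Summable (fun p : Gamma n =>
        ((nmax p.1 n : ℝ)) ^ (4 * s - 12 * σ) / ((phi p.1 n : ℝ)) ^ 2) ∧
      ∑' p : Gamma n,
        ((nmax p.1 n : ℝ)) ^ (4 * s - 12 * σ) / ((phi p.1 n : ℝ)) ^ 2 ≤ C := by
  have hα : 4 * s - 12 * σ ≤ 4 := by subst hσ; linarith
  -- base summable function on ℤ × ℤ
  have hf : Summable (fun a : ℤ => 1 / (a : ℝ) ^ 2) :=
    Real.summable_one_div_int_pow.2 one_lt_two
  have hfnn : 0 ≤ (fun a : ℤ => 1 / (a : ℝ) ^ 2) := fun a => by positivity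
  have hF : Summable (fun x : ℤ × ℤ => 1 / (x.1 : ℝ) ^ 2 * (1 / (x.2 : ℝ) ^ 2)) :=
    hf.mul_of_nonneg hf hfnn hfnn
  set F : ℤ × ℤ → ℝ := fun x => 36 * (1 / (x.1 : ℝ) ^ 2 * (1 / (x.2 : ℝ) ^ 2)) with hFdef
  have hFsum : Summable F := hF.mul_left 36
  have hFnn : ∀ x, 0 ≤ F x := fun x => by rw [hFdef]; positivity
  refine ⟨∑' x : ℤ × ℤ, F x, fun n => ?_⟩
  set e : Gamma n → ℤ × ℤ := fun p => (p.1.1 - n, p.1.2.2 - n) with hedef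
  have hinj : Function.Injective e := by
    intro p p' h
    rw [hedef] at h
    simp only [Prod.mk.injEq] at h
    have h1 : p.1.1 = p'.1.1 := by omega
    have h3 : p.1.2.2 = p'.1.2.2 := by omega
    have hp := p.2.1
    have hp' := p'.2.1
    have h2 : p.1.2.1 = p'.1.2.1 := by omega
    exact Subtype.ext (Prod.ext h1 (Prod.ext h2 h3))
  have hFe : Summable (F ∘ e) := hFsum.comp_injective hinj
  have hle : ∀ p : Gamma n,
      ((nmax p.1 n : ℝ)) ^ (4 * s - 12 * σ) / ((phi p.1 n : ℝ)) ^ 2 ≤ (F ∘ e) p := by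
    intro p
    have h := key_bound (n := n) (α := 4 * s - 12 * σ) hα p.2
    simpa [hFdef, hedef, Function.comp] using h
  have hnn : ∀ p : Gamma n,
      0 ≤ ((nmax p.1 n : ℝ)) ^ (4 * s - 12 * σ) / ((phi p.1 n : ℝ)) ^ 2 := by
    intro p
    have h0 : (0 : ℤ) ≤ nmax p.1 n :=
      le_trans (abs_nonneg p.1.1) (le_trans (le_max_left _ _) (le_max_left _ _))
    have h0' : (0 : ℝ) ≤ ((nmax p.1 n : ℤ) : ℝ) := by exact_mod_cast h0
    have h1 : (0 : ℝ) ≤ ((nmax p.1 n : ℝ)) ^ (4 * s - 12 * σ) := Real.rpow_nonneg h0' _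
    positivity
  have hsum : Summable (fun p : Gamma n =>
      ((nmax p.1 n : ℝ)) ^ (4 * s - 12 * σ) / ((phi p.1 n : ℝ)) ^ 2) :=
    Summable.of_nonneg_of_le hnn hle hFe
  refine ⟨hsum, ?_⟩
  calc ∑' p : Gamma n, ((nmax p.1 n : ℝ)) ^ (4 * s - 12 * σ) / ((phi p.1 n : ℝ)) ^ 2
      ≤ ∑' p : Gamma n, (F ∘ e) p := Summable.tsum_le_tsum hle hsum hFe
    _ ≤ ∑' x : ℤ × ℤ, F x :=
        Summable.tsum_le_tsum_of_inj e hinj (fun c _ => hFnn c) (fun p => le_refl _) hFe hFsum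
end
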